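/- arXiv:1306.2165 — 9 statements merged into one kernel-verified Lean document; each statement's English description precedes it below -/
import Mathlib

section
/- Let σ₁ ∈ ℝ, let d ≥ 1 be an integer, let (ρ_j)_{j≥1} be complex numbers with Re ρ_j ≤ σ₁ and ρ_j ≠ σ₁, and let (n_j)_{j≥1} be integers such that ∑_j |n_j| · |ρ_j − σ₁|^{−d} < ∞. Then for every σ₂ > σ₁ there is a constant C₀ > 0 such that for all s with Re s ≥ σ₂ the series G(s) = ∑_j n_j · (s − σ₁)^{d−1} / ((ρ_j − σ₁)^{d−1} (ρ_j − s)) converges absolutely and satisfies |G(s)| ≤ C₀ |s − σ₁|^d. -/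
open Complex

/-! Put `A = |s - σ₁|`, `B = |ρ - σ₁|`, `R = |ρ - s|`. On the half-plane `Re s ≥ σ₁ + δ` both `A`
and `R` are at least `δ`, so the triangle inequality `B ≤ A + R` improves to `B ≤ (2/δ) A R`.
This turns the `j`-th term `|n| A^(d-1) / (B^(d-1) R)` of `G(s)` into at most
`(2/δ) A^d · |n| / B^d`, and the hypothesis on the divisor makes these majorants summable. -/

noncomputable def hadamardLogDerivTerm (σ₁ : ℝ) (d : ℕ) (ρ : ℂ) (m : ℤ) (s : ℂ) : ℂ :=
  m * (s - σ₁) ^ (d - 1) / ((ρ - σ₁) ^ (d - 1) * (ρ - s))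

section HalfPlane

variable {σ₁ δ : ℝ} {ρ s : ℂ}

lemma le_norm_sub_ofReal_of_le_re (hs : σ₁ + δ ≤ s.re) : δ ≤ ‖s - σ₁‖ := by
  have := re_le_norm (s - σ₁)
  simp only [sub_re, ofReal_re] at this
  linarith

lemma le_norm_sub_of_le_re (hρ : ρ.re ≤ σ₁) (hs : σ₁ + δ ≤ s.re) : δ ≤ ‖ρ - s‖ := by
  have := re_le_norm (s - ρ)
  rw [sub_re, ← norm_sub_rev] at this
  linarith

lemma norm_sub_ofReal_le_two_div_mul (hδ : 0 < δ) (hρ : ρ.re ≤ σ₁) (hs : σ₁ + δ ≤ s.re) :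
    ‖ρ - σ₁‖ ≤ 2 / δ * (‖s - σ₁‖ * ‖ρ - s‖) := by
  have hA := le_norm_sub_ofReal_of_le_re hs
  have hR := le_norm_sub_of_le_re hρ hs
  have htri : ‖ρ - σ₁‖ ≤ ‖ρ - s‖ + ‖s - σ₁‖ := norm_sub_le_norm_sub_add_norm_sub _ _ _
  rw [div_mul_eq_mul_div, le_div_iff₀ hδ]
  nlinarith [mul_le_mul_of_nonneg_right hA (hδ.le.trans hR),
    mul_le_mul_of_nonneg_left hR (hδ.le.trans hA)]

lemma norm_hadamardLogDerivTerm_le (hδ : 0 < δ) (hρ : ρ.re ≤ σ₁) (hρσ : ρ ≠ σ₁)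
    (hs : σ₁ + δ ≤ s.re) (d : ℕ) (m : ℤ) :
    ‖hadamardLogDerivTerm σ₁ d ρ m s‖ ≤ 2 / δ * ‖s - σ₁‖ ^ d * (|(m : ℝ)| / ‖ρ - σ₁‖ ^ d) := by
  have hR := le_norm_sub_of_le_re hρ hs
  have hR0 : 0 < ‖ρ - s‖ := hδ.trans_le hR
  have hB0 : 0 < ‖ρ - σ₁‖ := norm_pos_iff.mpr (sub_ne_zero.mpr hρσ)
  simp only [hadamardLogDerivTerm, norm_div, norm_mul, norm_pow, norm_intCast]
  cases d with
  | zero =>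
    -- `0 - 1 = 0` in `ℕ`, so the term is `m / (ρ - s)` and `R ≥ δ` alone bounds it.
    simp only [zero_tsub, pow_zero, one_mul, mul_one, div_one]
    calc |(m : ℝ)| / ‖ρ - s‖ ≤ |(m : ℝ)| / δ := by gcongr
      _ ≤ 2 / δ * |(m : ℝ)| := by
          rw [div_mul_eq_mul_div]; gcongr; linarith [abs_nonneg (m : ℝ)]
  | succ e =>
    have hB := norm_sub_ofReal_le_two_div_mul hδ hρ hs
    simp only [Nat.add_sub_cancel]
    calc |(m : ℝ)| * ‖s - σ₁‖ ^ e / (‖ρ - σ₁‖ ^ e * ‖ρ - s‖)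
        = |(m : ℝ)| * ‖s - σ₁‖ ^ e * ‖ρ - σ₁‖ / (‖ρ - σ₁‖ ^ (e + 1) * ‖ρ - s‖) := by
          field_simp; ring
      _ ≤ |(m : ℝ)| * ‖s - σ₁‖ ^ e * (2 / δ * (‖s - σ₁‖ * ‖ρ - s‖)) /
            (‖ρ - σ₁‖ ^ (e + 1) * ‖ρ - s‖) := by gcongr
      _ = 2 / δ * ‖s - σ₁‖ ^ (e + 1) * (|(m : ℝ)| / ‖ρ - σ₁‖ ^ (e + 1)) := by
          field_simp; ring

end HalfPlane

theorem stmt1_general (σ₁ : ℝ) (d : ℕ) (ρ : ℕ → ℂ) (n : ℕ → ℤ)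
    (hρre : ∀ j, (ρ j).re ≤ σ₁) (hρne : ∀ j, ρ j ≠ (σ₁ : ℂ))
    (hsum : Summable fun j => (|n j| : ℝ) / ‖ρ j - σ₁‖ ^ d) :
    ∀ σ₂ : ℝ, σ₁ < σ₂ → ∃ C₀ > (0 : ℝ), ∀ s : ℂ, σ₂ ≤ s.re →
      Summable (fun j => ‖
        ((n j : ℂ) * (s - σ₁) ^ (d - 1) / ((ρ j - σ₁) ^ (d - 1) * (ρ j - s)))‖) ∧
      ‖(∑' j, (n j : ℂ) * (s - σ₁) ^ (d - 1) /
          ((ρ j - σ₁) ^ (d - 1) * (ρ j - s)))‖ ≤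
        C₀ * ‖s - σ₁‖ ^ d := by
  intro σ₂ hσ₂
  have hδ : 0 < σ₂ - σ₁ := sub_pos.mpr hσ₂
  set S := ∑' j, (|n j| : ℝ) / ‖ρ j - σ₁‖ ^ d
  have hS : 0 ≤ S := tsum_nonneg fun j => by positivity
  refine ⟨2 / (σ₂ - σ₁) * (S + 1), by positivity, fun s hs => ?_⟩
  have hbound (j : ℕ) := norm_hadamardLogDerivTerm_le hδ (hρre j) (hρne j)
    (by rwa [add_sub_cancel]) d (n j)
  have hmajorant := hsum.mul_left (2 / (σ₂ - σ₁) * ‖s - σ₁‖ ^ d)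
  refine ⟨hmajorant.of_nonneg_of_le (fun j => norm_nonneg _) hbound, ?_⟩
  calc ‖∑' j, hadamardLogDerivTerm σ₁ d (ρ j) (n j) s‖
      ≤ ∑' j, 2 / (σ₂ - σ₁) * ‖s - σ₁‖ ^ d * ((|n j| : ℝ) / ‖ρ j - σ₁‖ ^ d) :=
        tsum_of_norm_bounded hmajorant.hasSum hbound
    _ = 2 / (σ₂ - σ₁) * ‖s - σ₁‖ ^ d * S := tsum_mul_left
    _ ≤ 2 / (σ₂ - σ₁) * (S + 1) * ‖s - σ₁‖ ^ d := by
        rw [mul_right_comm]; gcongr; linarith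

/-- Sharp polynomial growth estimate for the logarithmic derivative of the
Hadamard part of a meromorphic function with left located divisor:
on every half-plane Re s ≥ σ₂ > σ₁, the series
G(s) = ∑_j n_j (s−σ₁)^{d−1} / ((ρ_j−σ₁)^{d−1} (ρ_j − s))
converges absolutely and |G(s)| ≤ C₀ |s − σ₁|^d. -/
theorem stmt1 (σ₁ : ℝ) (d : ℕ) (hd : 1 ≤ d) (ρ : ℕ → ℂ) (n : ℕ → ℤ)
    (hρre : ∀ j, (ρ j).re ≤ σ₁) (hρne : ∀ j, ρ j ≠ (σ₁ : ℂ))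
    (hsum : Summable fun j => (|n j| : ℝ) / ‖ρ j - σ₁‖ ^ d) :
    ∀ σ₂ : ℝ, σ₁ < σ₂ → ∃ C₀ > (0 : ℝ), ∀ s : ℂ, σ₂ ≤ s.re →
      Summable (fun j => ‖
        ((n j : ℂ) * (s - σ₁) ^ (d - 1) / ((ρ j - σ₁) ^ (d - 1) * (ρ j - s)))‖) ∧
      ‖(∑' j, (n j : ℂ) * (s - σ₁) ^ (d - 1) /
          ((ρ j - σ₁) ^ (d - 1) * (ρ j - s)))‖ ≤
        C₀ * ‖s - σ₁‖ ^ d :=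
  stmt1_general σ₁ d ρ n hρre hρne hsum
end

section
/- Let σ₁ ∈ ℝ and let c ≥ σ₁ + 4. There exists a constant C > 0, depending only on a = c − σ₁, such that for every complex number ρ with Re ρ ≤ σ₁ one has ∫_ℝ |ρ − σ₁| / (|c + it − σ₁|² · |ρ − (c + it)|) dt ≤ C. -/
open Complex MeasureTheory

/-! Write `z = c + it - σ₁` and `w = c + it - ρ`, so that `ρ - σ₁ = z - w` and both `z` and `w`
have real part at least `a ≥ 1`. By the triangle inequality and AM-GM the integrand is at most
`3/(2|z|²) + 1/(2|w|²) ≤ 3/(2(1+t²)) + 1/(2(1+(t - Im ρ)²))`, two Cauchy kernels whose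
integrals over `ℝ` are `3π/2` and `π/2`; so `C = 2π` works. -/

lemma one_add_sq_im_le_sq_norm {z : ℂ} (h : 1 ≤ z.re) : 1 + z.im ^ 2 ≤ ‖z‖ ^ 2 := by
  rw [Complex.sq_norm, Complex.normSq_apply]
  nlinarith

lemma add_div_sq_mul_le {x y : ℝ} (hx : 0 < x) (hy : 0 < y) :
    (x + y) / (x ^ 2 * y) ≤ 3 / 2 * (x ^ 2)⁻¹ + 1 / 2 * (y ^ 2)⁻¹ := by
  rw [div_le_iff₀ (by positivity)]
  field_simp
  nlinarith [mul_nonneg (sq_nonneg (x - y)) (mul_pos hx hy).le]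

lemma norm_sub_div_le {z w : ℂ} (hz : 1 ≤ z.re) (hw : 1 ≤ w.re) :
    ‖z - w‖ / (‖z‖ ^ 2 * ‖w‖) ≤ 3 / 2 * (1 + z.im ^ 2)⁻¹ + 1 / 2 * (1 + w.im ^ 2)⁻¹ := by
  have hz₀ : 0 < ‖z‖ := norm_pos_iff.2 fun h ↦ by simp [h] at hz; linarith
  have hw₀ : 0 < ‖w‖ := norm_pos_iff.2 fun h ↦ by simp [h] at hw; linarith
  calc ‖z - w‖ / (‖z‖ ^ 2 * ‖w‖) ≤ (‖z‖ + ‖w‖) / (‖z‖ ^ 2 * ‖w‖) := by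
        gcongr; exact norm_sub_le z w
    _ ≤ 3 / 2 * (‖z‖ ^ 2)⁻¹ + 1 / 2 * (‖w‖ ^ 2)⁻¹ := add_div_sq_mul_le hz₀ hw₀
    _ ≤ 3 / 2 * (1 + z.im ^ 2)⁻¹ + 1 / 2 * (1 + w.im ^ 2)⁻¹ := by
        gcongr
        exacts [one_add_sq_im_le_sq_norm hz, one_add_sq_im_le_sq_norm hw]

lemma integrable_inv_one_add_sq_sub (τ : ℝ) :
    Integrable fun t : ℝ ↦ (1 + (t - τ) ^ 2)⁻¹ :=
  integrable_inv_one_add_sq.comp_sub_right τ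

lemma integral_inv_one_add_sq_sub (τ : ℝ) : ∫ t : ℝ, (1 + (t - τ) ^ 2)⁻¹ = Real.pi := by
  rw [integral_sub_right_eq_self (fun t : ℝ ↦ (1 + t ^ 2)⁻¹) τ, integral_univ_inv_one_add_sq]

lemma integrable_and_integral_le_of_le {f g : ℝ → ℝ} (hf : Measurable f) (hf₀ : 0 ≤ f)
    (hg : Integrable g) (hfg : f ≤ g) : Integrable f ∧ ∫ t, f t ≤ ∫ t, g t := by
  have hf_int : Integrable f :=
    hg.mono' hf.aestronglyMeasurable (.of_forall fun t ↦ by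
      rw [Real.norm_of_nonneg (hf₀ t)]; exact hfg t)
  exact ⟨hf_int, integral_mono hf_int hg hfg⟩

/-- Uniform bound on the vertical-line integral used to prove that the vertical
order of the Hadamard part is at most d+1: for c = σ₁ + a with a ≥ 4 there is
a constant C > 0, depending only on a, such that for every ρ with Re ρ ≤ σ₁,
∫_ℝ |ρ−σ₁| / (|c+it−σ₁|² |ρ−(c+it)|) dt ≤ C. -/
theorem stmt2 (a : ℝ) (ha : 4 ≤ a) :
    ∃ C > (0 : ℝ), ∀ σ₁ c : ℝ, c = σ₁ + a → ∀ ρ : ℂ, ρ.re ≤ σ₁ →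
      Integrable (fun t : ℝ =>
        ‖ρ - σ₁‖ /
          (‖(c : ℂ) + t * I - σ₁‖ ^ 2 *
            ‖ρ - ((c : ℂ) + t * I)‖)) ∧
      (∫ t : ℝ, ‖ρ - σ₁‖ /
          (‖(c : ℂ) + t * I - σ₁‖ ^ 2 *
            ‖ρ - ((c : ℂ) + t * I)‖)) ≤ C := by
  refine ⟨2 * Real.pi, by positivity, fun σ₁ c hc ρ hρ ↦ ?_⟩
  set g : ℝ → ℝ := fun t ↦ 3 / 2 * (1 + t ^ 2)⁻¹ + 1 / 2 * (1 + (t - ρ.im) ^ 2)⁻¹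
  have hg : Integrable g :=
    (integrable_inv_one_add_sq.const_mul _).add ((integrable_inv_one_add_sq_sub _).const_mul _)
  have hg_integral : ∫ t, g t = 2 * Real.pi := by
    rw [integral_add (integrable_inv_one_add_sq.const_mul _)
      ((integrable_inv_one_add_sq_sub _).const_mul _), integral_const_mul, integral_const_mul,
      integral_univ_inv_one_add_sq, integral_inv_one_add_sq_sub]
    ring
  have hfg : ∀ t : ℝ, ‖ρ - σ₁‖ / (‖(c : ℂ) + t * I - σ₁‖ ^ 2 * ‖ρ - ((c : ℂ) + t * I)‖) ≤ g t := by
    intro t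
    have hre : ((c : ℂ) + t * I).re = c := by simp
    have key := norm_sub_div_le (z := c + t * I - σ₁) (w := c + t * I - ρ)
      (by rw [sub_re, hre, ofReal_re]; linarith) (by rw [sub_re, hre]; linarith)
    rw [sub_sub_sub_cancel_left, norm_sub_rev (c + t * I : ℂ) ρ] at key
    simpa [g] using key
  have hf := integrable_and_integral_le_of_le (by fun_prop) (fun t ↦ by positivity) hg hfg
  exact ⟨hf.1, hg_integral ▸ hf.2⟩
end

section
/- Let σ₁ ∈ ℝ, let d ≥ 1 be an integer, let (ρ_j)_{j≥1} be complex numbers with Re ρ_j ≤ σ₁ and ρ_j ≠ σ₁, and let (n_j)_{j≥1} be integers such that ∑_j |n_j| · |ρ_j − σ₁|^{−d} < ∞. Set G(s) = ∑_j n_j · (s − σ₁)^{d−1} / ((ρ_j − σ₁)^{d−1} (ρ_j − s)). Then for every c > σ₁ the function t ↦ |G(c + it)| / (1 + |t|)^{d+1} is integrable on ℝ. -/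
/-!
Write `s = c + it` and `δ = c - σ₁ > 0`. Since `‖s - σ₁‖ ≤ (1 + δ)(1 + |t|)`, the `j`-th term of
`G(s) / (1 + |t|)^(d+1)` is at most a constant times
`|n_j| / ‖ρ_j - σ₁‖^d · ‖ρ_j - σ₁‖ / (‖ρ_j - s‖ (1 + |t|)^2)`.
Splitting `‖ρ_j - σ₁‖ ≤ ‖ρ_j - s‖ + ‖s - σ₁‖` and using `‖ρ_j - s‖ ≳ 1 + |t - Im ρ_j|` bounds the
last factor by a multiple of the two Cauchy kernels `1/(1+t²) + 1/(1+(t - Im ρ_j)²)`, whose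
integral `2π` does not depend on `j`. The series of majorants is therefore integrable.
-/

open Complex MeasureTheory

theorem MeasureTheory.integrable_tsum_of_norm_le {α E ι : Type*} [MeasurableSpace α]
    {μ : Measure α} [NormedAddCommGroup E] [CompleteSpace E] [SecondCountableTopology E]
    [MeasurableSpace E] [BorelSpace E] [Countable ι] {F : ι → α → E} {g : ι → α → ℝ}
    (hF : ∀ i, AEMeasurable (F i) μ) (hFg : ∀ i, ∀ᵐ x ∂μ, ‖F i x‖ ≤ g i x)
    (hg : ∀ i, Integrable (g i) μ) (hsum : Summable fun i => ∫ x, g i x ∂μ) :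
    Integrable (fun x => ∑' i, F i x) μ := by
  have hg_nonneg : ∀ i, 0 ≤ᵐ[μ] g i := fun i =>
    (hFg i).mono fun x hx => (norm_nonneg _).trans hx
  refine ⟨(AEMeasurable.tsum hF).aestronglyMeasurable, ?_⟩
  calc ∫⁻ x, ‖∑' i, F i x‖ₑ ∂μ ≤ ∫⁻ x, ∑' i, ENNReal.ofReal (g i x) ∂μ := by
        refine lintegral_mono_ae ?_
        filter_upwards [ae_all_iff.2 hFg] with x hx
        refine enorm_tsum_le_tsum_enorm.trans (ENNReal.tsum_le_tsum fun i => ?_)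
        rw [← ofReal_norm]
        exact ENNReal.ofReal_le_ofReal (hx i)
    _ = ∑' i, ENNReal.ofReal (∫ x, g i x ∂μ) := by
        rw [lintegral_tsum fun i => (hg i).aemeasurable.ennreal_ofReal]
        congr 1 with i
        rw [ofReal_integral_eq_lintegral_ofReal (hg i) (hg_nonneg i)]
    _ = ENNReal.ofReal (∑' i, ∫ x, g i x ∂μ) :=
        (ENNReal.ofReal_tsum_of_nonneg (fun i => integral_nonneg_of_ae (hg_nonneg i)) hsum).symm
    _ < ⊤ := ENNReal.ofReal_lt_top

/-- AM–GM gives `2 / ((1 + x)(1 + y)) ≤ 1 / (1 + x)² + 1 / (1 + y)²`, and `(1 + x)² ≥ 1 + x²`. -/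
theorem inv_mul_one_add_le_inv_one_add_sq_add {x y : ℝ} (hx : 0 ≤ x) (hy : 0 ≤ y) :
    ((1 + x) * (1 + y))⁻¹ ≤ (1 + x ^ 2)⁻¹ + (1 + y ^ 2)⁻¹ := by
  rw [inv_add_inv (by positivity) (by positivity), ← one_div,
    div_le_div_iff₀ (by positivity) (by positivity)]
  nlinarith [mul_nonneg (mul_nonneg hx hy) (sq_nonneg (x - y)), mul_nonneg hx hy]

theorem norm_intCast_mul_div_le {d : ℕ} (hd : 1 ≤ d) (m : ℤ) {a ρ s : ℂ} (hρ : ρ ≠ a)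
    {K T : ℝ} (hT : 0 < T) (hs : ‖s - a‖ ≤ K * T) :
    ‖(m : ℂ) * (s - a) ^ (d - 1) / ((ρ - a) ^ (d - 1) * (ρ - s))‖ / T ^ (d + 1) ≤
      K ^ (d - 1) * (|(m : ℝ)| / ‖ρ - a‖ ^ d) * (‖ρ - a‖ / (‖ρ - s‖ * T ^ 2)) := by
  obtain ⟨e, rfl⟩ : ∃ e, d = e + 1 := ⟨d - 1, by omega⟩
  have hr : ‖ρ - a‖ ≠ 0 := norm_ne_zero_iff.2 (sub_ne_zero.2 hρ)
  simp only [Nat.add_sub_cancel, norm_div, norm_mul, norm_pow, norm_intCast]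
  calc |(m : ℝ)| * ‖s - a‖ ^ e / (‖ρ - a‖ ^ e * ‖ρ - s‖) / T ^ (e + 1 + 1)
      ≤ |(m : ℝ)| * (K * T) ^ e / (‖ρ - a‖ ^ e * ‖ρ - s‖) / T ^ (e + 1 + 1) := by gcongr
    _ = _ := by field_simp; ring

theorem one_add_abs_sub_im_le {σ₁ c : ℝ} {ρ : ℂ} (hρ : ρ.re ≤ σ₁) (hc : σ₁ < c) (t : ℝ) :
    1 + |t - ρ.im| ≤ (1 + (c - σ₁)⁻¹) * ‖ρ - (c + t * I)‖ := by
  have hre : c - σ₁ ≤ ‖ρ - (c + t * I)‖ := by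
    refine le_trans ?_ (abs_re_le_norm _)
    simp only [sub_re, add_re, ofReal_re, mul_re, ofReal_im, I_re, I_im]
    rw [abs_of_nonpos (by linarith)]; linarith
  have him : |t - ρ.im| ≤ ‖ρ - (c + t * I)‖ := by
    refine le_trans ?_ (abs_im_le_norm _)
    simp [abs_sub_comm]
  have : 1 ≤ (c - σ₁)⁻¹ * ‖ρ - (c + t * I)‖ := by
    rw [inv_mul_eq_div, one_le_div (by linarith)]; exact hre
  nlinarith

theorem norm_add_mul_I_sub_le {σ₁ c : ℝ} (hc : σ₁ ≤ c) (t : ℝ) :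
    ‖(c : ℂ) + t * I - σ₁‖ ≤ (1 + (c - σ₁)) * (1 + |t|) := by
  have hre : ((c : ℂ) + t * I - σ₁).re = c - σ₁ := by simp
  have him : ((c : ℂ) + t * I - σ₁).im = t := by simp
  refine (norm_le_abs_re_add_abs_im _).trans ?_
  rw [hre, him, abs_of_nonneg (sub_nonneg.2 hc)]
  nlinarith [abs_nonneg t]

theorem norm_sub_div_norm_sub_mul_sq_le {σ₁ c : ℝ} {ρ : ℂ} (hρ : ρ.re ≤ σ₁) (hc : σ₁ < c)
    (t : ℝ) :
    ‖ρ - σ₁‖ / (‖ρ - (c + t * I)‖ * (1 + |t|) ^ 2) ≤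
      (1 + (1 + (c - σ₁)) * (1 + (c - σ₁)⁻¹)) *
        ((1 + t ^ 2)⁻¹ + (1 + (t - ρ.im) ^ 2)⁻¹) := by
  set s : ℂ := c + t * I
  set K := 1 + (c - σ₁)
  set A := 1 + (c - σ₁)⁻¹
  set R := ‖ρ - s‖
  set T := 1 + |t|
  set h := (1 + t ^ 2)⁻¹ + (1 + (t - ρ.im) ^ 2)⁻¹
  have hA : 0 < A := by have := inv_pos.2 (sub_pos.2 hc); positivity
  have hK : 0 < K := by linarith
  have hT : 1 ≤ T := le_add_of_nonneg_right (abs_nonneg t)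
  have hR : 1 + |t - ρ.im| ≤ A * R := one_add_abs_sub_im_le hρ hc t
  have hR0 : 0 < R := pos_of_mul_pos_right (lt_of_lt_of_le (by positivity) hR) hA.le
  have hs : ‖s - σ₁‖ ≤ K * T := norm_add_mul_I_sub_le hc.le t
  have h₁ : (T ^ 2)⁻¹ ≤ h := by
    refine le_add_of_le_of_nonneg (inv_anti₀ (by positivity) ?_) (by positivity)
    nlinarith [sq_abs t, abs_nonneg t]
  have h₂ : (R * T)⁻¹ ≤ A * h := by
    calc (R * T)⁻¹ ≤ (A⁻¹ * ((1 + |t - ρ.im|) * T))⁻¹ := by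
          refine inv_anti₀ (by positivity) ?_
          rw [← mul_assoc]
          exact mul_le_mul_of_nonneg_right ((inv_mul_le_iff₀ hA).2 hR) (by linarith)
      _ = A * ((T * (1 + |t - ρ.im|))⁻¹) := by rw [mul_inv, inv_inv, mul_comm T]
      _ ≤ A * h := by
          gcongr
          simpa only [sq_abs, T, h] using
            inv_mul_one_add_le_inv_one_add_sq_add (abs_nonneg t) (abs_nonneg (t - ρ.im))
  calc ‖ρ - σ₁‖ / (R * T ^ 2) ≤ (R + K * T) / (R * T ^ 2) := by
        gcongr
        exact (norm_sub_le_norm_sub_add_norm_sub ρ s σ₁).trans (by linarith)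
    _ = (T ^ 2)⁻¹ + K * (R * T)⁻¹ := by field_simp
    _ ≤ h + K * (A * h) := by gcongr
    _ = (1 + K * A) * h := by ring

theorem integrable_inv_one_add_sq_add_inv_one_add_sub_sq (γ : ℝ) :
    Integrable fun t : ℝ => (1 + t ^ 2)⁻¹ + (1 + (t - γ) ^ 2)⁻¹ :=
  integrable_inv_one_add_sq.add (integrable_inv_one_add_sq.comp_sub_right γ)

theorem integral_inv_one_add_sq_add_inv_one_add_sub_sq (γ : ℝ) :
    ∫ t : ℝ, ((1 + t ^ 2)⁻¹ + (1 + (t - γ) ^ 2)⁻¹) = 2 * Real.pi := by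
  rw [integral_add integrable_inv_one_add_sq (integrable_inv_one_add_sq.comp_sub_right γ),
    integral_sub_right_eq_self (fun t => (1 + t ^ 2)⁻¹) γ, integral_univ_inv_one_add_sq]
  ring

/-- The vertical order of the Hadamard part is at most d+1: for every c > σ₁,
the function t ↦ |G(c+it)| / (1+|t|)^{d+1} is integrable on ℝ, where
G(s) = ∑_j n_j (s−σ₁)^{d−1} / ((ρ_j−σ₁)^{d−1} (ρ_j − s)). -/
theorem stmt3 (σ₁ : ℝ) (d : ℕ) (hd : 1 ≤ d) (ρ : ℕ → ℂ) (n : ℕ → ℤ)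
    (hρre : ∀ j, (ρ j).re ≤ σ₁) (hρne : ∀ j, ρ j ≠ (σ₁ : ℂ))
    (hsum : Summable fun j => (|n j| : ℝ) / ‖ρ j - σ₁‖ ^ d) :
    ∀ c : ℝ, σ₁ < c →
      Integrable (fun t : ℝ =>
        ‖∑' j, (n j : ℂ) * (((c : ℂ) + t * I) - σ₁) ^ (d - 1) /
            ((ρ j - σ₁) ^ (d - 1) * (ρ j - ((c : ℂ) + t * I)))‖ /
          (1 + |t|) ^ (d + 1)) := by
  intro c hc
  set K := 1 + (c - σ₁)
  set C := 1 + K * (1 + (c - σ₁)⁻¹)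
  set a : ℕ → ℝ := fun j => (|n j| : ℝ) / ‖ρ j - σ₁‖ ^ d
  set g : ℕ → ℝ → ℝ := fun j t =>
    K ^ (d - 1) * a j * (C * ((1 + t ^ 2)⁻¹ + (1 + (t - (ρ j).im) ^ 2)⁻¹))
  have hg_int : ∀ j, ∫ t, g j t = K ^ (d - 1) * a j * (C * (2 * Real.pi)) := fun j => by
    simp only [g, integral_const_mul, integral_inv_one_add_sq_add_inv_one_add_sub_sq]
  refine (integrable_tsum_of_norm_le (g := g)
    (F := fun j (t : ℝ) => (n j : ℂ) * (((c : ℂ) + t * I) - σ₁) ^ (d - 1) /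
      ((ρ j - σ₁) ^ (d - 1) * (ρ j - ((c : ℂ) + t * I))) / ((1 + |t|) ^ (d + 1) : ℝ))
    (fun j => by fun_prop) (fun j => ae_of_all _ fun t => ?_)
    (fun j => ((integrable_inv_one_add_sq_add_inv_one_add_sub_sq _).const_mul _).const_mul _)
    (by simpa only [hg_int] using (hsum.mul_left _).mul_right _)).norm.congr
    (ae_of_all _ fun t => ?_)
  · rw [norm_div, norm_real, Real.norm_of_nonneg (by positivity)]
    refine (norm_intCast_mul_div_le hd (n j) (hρne j) (by positivity)
      (norm_add_mul_I_sub_le hc.le t)).trans ?_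
    exact mul_le_mul_of_nonneg_left (norm_sub_div_norm_sub_mul_sq_le (hρre j) hc t)
      (by positivity)
  · dsimp only
    rw [tsum_div_const, norm_div, norm_real, Real.norm_of_nonneg (by positivity)]
end

section
/- Let f(s) = 1 + ∑_{n≥1} aₙ e^{−λₙ s} be a non-constant Dirichlet series (i.e. aₙ ≠ 0 for some n). Suppose F, G : ℂ → ℂ are entire functions, G not identically zero, G(s)·f(s) = F(s) for all s with Re s > σ̄, and for some A > 0 and real α ≥ 0 one has ‖F(s)‖ ≤ exp(A(1 + ‖s‖)^α) and ‖G(s)‖ ≤ exp(A(1 + ‖s‖)^α) for all s ∈ ℂ. Then α ≥ 1; that is, the order of f satisfies o(f) ≥ 1. -/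
/-
Suppose `α < 1`. On the half-plane `Re s > σ̄` the entire function `F - G = G · (f - 1)` is
`O(exp (A (1 + |s|) ^ α - λ₀ Re s))`, with `λ₀` the smallest exponent, so it is bounded on a
sector around the positive real axis. Since its order is below `1`, the Phragmén–Lindelöf
principle, applied on a horizontal strip after the substitution `s = exp w`, bounds it on the
complementary sector as well. By Liouville `F - G` is constant, and its decay along the real axis
makes it `0`. Then `G · (f - 1) = 0` with `G ≢ 0` forces `f = 1` on the half-plane, and uniqueness
of Dirichlet coefficients gives `aₙ = 0` for all `n`.
-/

open Complex Filter Set Topology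
open scoped Real

theorem exists_mul_one_add_rpow_le {α : ℝ} (hα : α < 1) (A : ℝ) {ε : ℝ} (hε : 0 < ε) :
    ∃ M, ∀ t : ℝ, 0 ≤ t → A * (1 + t) ^ α ≤ ε * t + M := by
  have hlim : Tendsto (fun t : ℝ => A * (1 + t) ^ (α - 1)) atTop (𝓝 0) := by
    have h := (tendsto_rpow_neg_atTop (sub_pos.2 hα)).comp
      (tendsto_atTop_add_const_left _ 1 tendsto_id)
    simpa [Function.comp_def] using h.const_mul A
  obtain ⟨T, hT⟩ := eventually_atTop.1 (hlim.eventually_le_const hε)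
  obtain ⟨M, hM⟩ := isCompact_Icc.exists_bound_of_continuousOn (s := Icc 0 T)
    (f := fun t : ℝ => A * (1 + t) ^ α) (by
      refine ContinuousOn.mul continuousOn_const fun t ht => ?_
      exact (ContinuousAt.rpow_const (by fun_prop) (Or.inl (by linarith [ht.1])))
        |>.continuousWithinAt)
  refine ⟨max M ε, fun t ht => ?_⟩
  rcases le_total t T with htT | hTt
  · linarith [(le_abs_self _).trans (hM t ⟨ht, htT⟩), le_max_left M ε, mul_nonneg hε.le ht]
  · have hpos : 0 < 1 + t := by linarith
    calc A * (1 + t) ^ α = A * (1 + t) ^ (α - 1) * (1 + t) := by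
          rw [mul_assoc, ← Real.rpow_add_one hpos.ne', sub_add_cancel]
      _ ≤ ε * (1 + t) := mul_le_mul_of_nonneg_right (hT t hTt) hpos.le
      _ ≤ ε * t + max M ε := by linarith [le_max_right M ε]

theorem eq_zero_of_eventually_norm_le_mul_exp_neg {E : Type*} [NormedAddCommGroup E] {v : E}
    {K δ : ℝ} (hδ : 0 < δ) (h : ∀ᶠ x in atTop, ‖v‖ ≤ K * Real.exp (-δ * x)) : v = 0 := by
  have hlim : Tendsto (fun x : ℝ => K * Real.exp (-δ * x)) atTop (𝓝 0) := by
    simpa using (Real.tendsto_exp_atBot.comp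
      (tendsto_id.const_mul_atTop_of_neg (neg_lt_zero.2 hδ))).const_mul K
  exact norm_le_zero_iff.1 (ge_of_tendsto hlim h)

theorem Complex.exists_exp_eq_of_re_lt_cos_mul_norm {θ : ℝ} (hθ : θ ∈ Icc 0 π) {z : ℂ}
    (hz : z.re < Real.cos θ * ‖z‖) :
    ∃ w, exp w = z ∧ θ ≤ w.im ∧ w.im ≤ 2 * π - θ := by
  have hz0 : -z ≠ 0 := by rintro h; simp [neg_eq_zero.1 h] at hz
  have harg : |arg (-z)| ≤ π - θ := by
    by_contra! h
    have hcos := Real.cos_lt_cos_of_nonneg_of_le_pi (by linarith [hθ.2]) (abs_arg_le_pi _) h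
    rw [Real.cos_abs, cos_arg hz0, Real.cos_pi_sub, norm_neg, neg_re,
      div_lt_iff₀ (norm_pos_iff.2 hz0 |>.trans_eq (norm_neg z))] at hcos
    linarith
  refine ⟨log (-z) + π * I, ?_, ?_, ?_⟩
  · rw [exp_add, exp_log hz0, exp_pi_mul_I]; ring
  all_goals simp only [add_im, log_im, mul_I_im, ofReal_re]; linarith [abs_le.1 harg]

theorem one_add_exp_rpow_le {β : ℝ} (hβ : 0 ≤ β) (x : ℝ) :
    (1 + Real.exp x) ^ β ≤ 2 ^ β * Real.exp (β * |x|) := by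
  have h : 1 + Real.exp x ≤ 2 * Real.exp |x| := by
    linarith [Real.exp_le_exp.2 (le_abs_self x), Real.one_le_exp (abs_nonneg x)]
  calc (1 + Real.exp x) ^ β ≤ (2 * Real.exp |x|) ^ β := by gcongr
    _ = 2 ^ β * Real.exp (β * |x|) := by
      rw [Real.mul_rpow zero_le_two (Real.exp_nonneg _), ← Real.exp_mul, mul_comm |x|]

theorem norm_le_of_norm_le_on_sector {E : Type*} [NormedAddCommGroup E] [NormedSpace ℂ E]
    {f : ℂ → E} (hf : Differentiable ℂ f) {A B β θ M : ℝ} (hβ : 0 ≤ β) (hθ : θ ∈ Icc 0 π)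
    (hβθ : β < π / (2 * π - 2 * θ))
    (hgrowth : ∀ z, ‖f z‖ ≤ B * Real.exp (A * (1 + ‖z‖) ^ β))
    (hsector : ∀ z, Real.cos θ * ‖z‖ ≤ z.re → ‖f z‖ ≤ M) (z : ℂ) : ‖f z‖ ≤ M := by
  rcases le_or_gt (Real.cos θ * ‖z‖) z.re with hz | hz
  · exact hsector z hz
  obtain ⟨w, rfl, hw₁, hw₂⟩ := exists_exp_eq_of_re_lt_cos_mul_norm hθ hz
  have hedge : ∀ w : ℂ, Real.cos w.im = Real.cos θ → ‖f (exp w)‖ ≤ M := fun w hw =>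
    hsector _ (by rw [exp_re, norm_exp, hw, mul_comm])
  have hgrowth_exp : ∀ w : ℂ,
      ‖f (exp w)‖ ≤ |B| * Real.exp (|A| * 2 ^ β * Real.exp (β * |w.re|)) := fun w =>
    calc ‖f (exp w)‖ ≤ |B| * Real.exp (A * (1 + Real.exp w.re) ^ β) := by
          rw [← norm_exp]; exact (hgrowth _).trans (by gcongr; exact le_abs_self B)
      _ ≤ |B| * Real.exp (|A| * 2 ^ β * Real.exp (β * |w.re|)) := by
          rw [mul_assoc |A|]
          refine mul_le_mul_of_nonneg_left (Real.exp_le_exp.2 ?_) (abs_nonneg B)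
          exact mul_le_mul (le_abs_self A) (one_add_exp_rpow_le hβ _) (by positivity) (abs_nonneg A)
  refine PhragmenLindelof.horizontal_strip (f := f ∘ exp) (hf.comp differentiable_exp).diffContOnCl
    ⟨β, by convert hβθ using 2; ring, |A| * 2 ^ β, .of_bound |B| (.of_forall fun w => ?_)⟩
    (fun w hw => hedge w (by rw [hw])) (fun w hw => hedge w (by rw [hw, Real.cos_two_pi_sub]))
    hw₁ hw₂
  simpa [Real.norm_eq_abs, Real.abs_exp] using hgrowth_exp w

section Decay

variable {E : Type*} [NormedAddCommGroup E] {f : ℂ → E} {A C c σ α : ℝ}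

theorem exists_norm_le_on_sector_of_decay (hf : Continuous f) (hα : α < 1) (hc : 0 < c)
    (hC : 0 ≤ C) (hdecay : ∀ z, σ < z.re → ‖f z‖ ≤ C * Real.exp (A * (1 + ‖z‖) ^ α - c * z.re))
    {κ : ℝ} (hκ : 0 < κ) : ∃ M, ∀ z, κ * ‖z‖ ≤ z.re → ‖f z‖ ≤ M := by
  obtain ⟨M₀, hM₀⟩ := exists_mul_one_add_rpow_le hα A (mul_pos hc hκ)
  obtain ⟨M₁, hM₁⟩ :=
    (isCompact_closedBall (0 : ℂ) ((|σ| + 1) / κ)).exists_bound_of_continuousOn hf.continuousOn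
  refine ⟨max M₁ (C * Real.exp M₀), fun z hz => ?_⟩
  rcases le_or_gt ‖z‖ ((|σ| + 1) / κ) with hR | hR
  · exact (hM₁ z (by simpa using hR)).trans (le_max_left _ _)
  have hσ : σ < z.re := by
    rw [div_lt_iff₀ hκ] at hR
    linarith [le_abs_self σ]
  refine (hdecay z hσ).trans (le_trans ?_ (le_max_right _ _))
  gcongr
  nlinarith [hM₀ ‖z‖ (norm_nonneg z), mul_le_mul_of_nonneg_left hz hc.le]

theorem exists_eventually_norm_le_of_decay (hα : α < 1) (hc : 0 < c) (hC : 0 ≤ C)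
    (hdecay : ∀ z, σ < z.re → ‖f z‖ ≤ C * Real.exp (A * (1 + ‖z‖) ^ α - c * z.re)) :
    ∃ K, ∀ᶠ x : ℝ in atTop, ‖f x‖ ≤ K * Real.exp (-(c / 2) * x) := by
  obtain ⟨M₀, hM₀⟩ := exists_mul_one_add_rpow_le hα A (half_pos hc)
  refine ⟨C * Real.exp M₀, ?_⟩
  filter_upwards [eventually_gt_atTop σ, eventually_ge_atTop 0] with x hσ hx
  refine (hdecay x (by simpa using hσ)).trans ?_
  rw [mul_assoc, ← Real.exp_add]
  gcongr
  simp only [norm_real, Real.norm_eq_abs, abs_of_nonneg hx, ofReal_re]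
  linarith [hM₀ x hx]

variable [NormedSpace ℂ E]

theorem eq_zero_of_growth_of_exp_decay (hf : Differentiable ℂ f) {B : ℝ} (hα₀ : 0 ≤ α)
    (hα₁ : α < 1) (hgrowth : ∀ z, ‖f z‖ ≤ B * Real.exp (A * (1 + ‖z‖) ^ α)) (hc : 0 < c)
    (hC : 0 ≤ C) (hdecay : ∀ z, σ < z.re → ‖f z‖ ≤ C * Real.exp (A * (1 + ‖z‖) ^ α - c * z.re)) :
    f = 0 := by
  -- the complement of the sector `|arg z| ≤ α π / 2` has opening `(2 - α) π`, and `α (2 - α) < 1`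
  have hθ : α * π / 2 ∈ Icc 0 π := ⟨by positivity, by nlinarith [Real.pi_pos]⟩
  have hαθ : α < π / (2 * π - 2 * (α * π / 2)) := by
    rw [lt_div_iff₀ (by nlinarith [Real.pi_pos])]
    nlinarith [mul_pos Real.pi_pos (pow_pos (sub_pos.2 hα₁) 2)]
  have hcos : 0 < Real.cos (α * π / 2) :=
    Real.cos_pos_of_mem_Ioo ⟨by nlinarith [Real.pi_pos], by nlinarith [Real.pi_pos]⟩
  obtain ⟨M, hM⟩ := exists_norm_le_on_sector_of_decay hf.continuous hα₁ hc hC hdecay hcos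
  have hbdd : Bornology.IsBounded (range f) := isBounded_iff_forall_norm_le.2
    ⟨M, by rintro _ ⟨z, rfl⟩; exact norm_le_of_norm_le_on_sector hf hα₀ hθ hαθ hgrowth hM z⟩
  obtain ⟨K, hK⟩ := exists_eventually_norm_le_of_decay hα₁ hc hC hdecay
  funext z
  refine eq_zero_of_eventually_norm_le_mul_exp_neg (K := K) (half_pos hc) ?_
  filter_upwards [hK] with x hx
  rwa [hf.apply_eq_apply_of_bounded hbdd z x]

end Decay

noncomputable def dirichletSum (a : ℕ → ℂ) (lam : ℕ → ℝ) (s : ℂ) : ℂ :=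
  ∑' n, a n * exp (-(lam n : ℂ) * s)

theorem norm_mul_exp_neg_mul_le (c : ℂ) {l μ σ : ℝ} {s : ℂ} (hμ : μ ≤ l) (hs : σ ≤ s.re) :
    ‖c * exp (-(l : ℂ) * s)‖ ≤ ‖c‖ * Real.exp (-l * σ) * Real.exp (-μ * (s.re - σ)) := by
  rw [norm_mul, norm_exp, mul_assoc, ← Real.exp_add]
  gcongr
  simp only [neg_mul, neg_re, re_ofReal_mul]
  nlinarith

section Dirichlet

variable {a : ℕ → ℂ} {lam : ℕ → ℝ} {σ : ℝ}

theorem norm_dirichletSum_le (hconv : Summable fun n => ‖a n‖ * Real.exp (-(lam n) * σ))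
    {μ : ℝ} (hμ : ∀ n, a n ≠ 0 → μ ≤ lam n) {s : ℂ} (hs : σ ≤ s.re) :
    ‖dirichletSum a lam s‖ ≤
      (∑' n, ‖a n‖ * Real.exp (-(lam n) * σ)) * Real.exp (-μ * (s.re - σ)) := by
  rw [← tsum_mul_right]
  refine tsum_of_norm_bounded (hconv.mul_right _).hasSum fun n => ?_
  by_cases h : a n = 0
  · simp only [h, zero_mul, norm_zero]; positivity
  · exact norm_mul_exp_neg_mul_le _ (hμ n h) hs

theorem summable_dirichlet_terms (hmono : Monotone lam)
    (hconv : Summable fun n => ‖a n‖ * Real.exp (-(lam n) * σ)) {s : ℂ} (hs : σ ≤ s.re) :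
    Summable fun n => a n * exp (-(lam n : ℂ) * s) :=
  .of_norm_bounded (hconv.mul_right _)
    fun n => norm_mul_exp_neg_mul_le _ (hmono (Nat.zero_le n)) hs

theorem continuousOn_dirichletSum (hlam : ∀ n, 0 ≤ lam n)
    (hconv : Summable fun n => ‖a n‖ * Real.exp (-(lam n) * σ)) :
    ContinuousOn (dirichletSum a lam) {s | σ ≤ s.re} :=
  continuousOn_tsum (fun n => by fun_prop) hconv fun n s hs => by
    simpa using norm_mul_exp_neg_mul_le (a n) (hlam n) hs

theorem exists_norm_dirichletSum_sub_le (hmono : StrictMono lam)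
    (hconv : Summable fun n => ‖a n‖ * Real.exp (-(lam n) * σ)) {m : ℕ}
    (hlow : ∀ k < m, a k = 0) :
    ∃ C, ∀ s : ℂ, σ ≤ s.re →
      ‖dirichletSum a lam s - a m * exp (-(lam m : ℂ) * s)‖ ≤
        C * Real.exp (-lam (m + 1) * (s.re - σ)) := by
  set b : ℕ → ℂ := fun n => if n = m then 0 else a n
  have hb_le : ∀ n, ‖b n‖ ≤ ‖a n‖ := fun n => by by_cases h : n = m <;> simp [b, h]
  have hbconv : Summable fun n => ‖b n‖ * Real.exp (-(lam n) * σ) :=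
    hconv.of_nonneg_of_le (fun n => by positivity)
      fun n => mul_le_mul_of_nonneg_right (hb_le n) (Real.exp_nonneg _)
  have hb : ∀ n, b n ≠ 0 → lam (m + 1) ≤ lam n := by
    intro n hn
    refine hmono.monotone (not_lt.1 fun h => hn ?_)
    rcases (Nat.lt_succ_iff.1 h).lt_or_eq with h | rfl
    · simp [b, h.ne, hlow n h]
    · simp [b]
  refine ⟨_, fun s hs => le_of_eq_of_le ?_ (norm_dirichletSum_le hbconv hb hs)⟩
  have := (summable_dirichlet_terms hmono.monotone hconv hs).tsum_eq_add_tsum_ite m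
  simp only [dirichletSum, b, ite_mul, zero_mul]
  rw [this, add_sub_cancel_left]

theorem coeff_eq_zero_of_dirichletSum_eq_zero (hmono : StrictMono lam)
    (hconv : Summable fun n => ‖a n‖ * Real.exp (-(lam n) * σ))
    (hzero : ∀ x : ℝ, σ < x → dirichletSum a lam x = 0) (n : ℕ) : a n = 0 := by
  induction n using Nat.strong_induction_on with
  | _ m ih =>
  obtain ⟨C, hC⟩ := exists_norm_dirichletSum_sub_le hmono hconv ih
  refine norm_eq_zero.1 (eq_zero_of_eventually_norm_le_mul_exp_neg
    (K := C * Real.exp (lam (m + 1) * σ)) (sub_pos.2 (hmono (Nat.lt_add_one m))) ?_)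
  filter_upwards [eventually_gt_atTop σ] with x hx
  have hbound := hC x (by simpa using hx.le)
  rw [hzero x hx, zero_sub, norm_neg, norm_mul, norm_exp] at hbound
  have hre : (-(lam m : ℂ) * x).re = -lam m * x := by simp
  rw [hre, ofReal_re] at hbound
  calc ‖‖a m‖‖ = ‖a m‖ * Real.exp (-lam m * x) * Real.exp (lam m * x) := by
        rw [norm_norm, mul_assoc, ← Real.exp_add, neg_mul, neg_add_cancel, Real.exp_zero, mul_one]
    _ ≤ C * Real.exp (-lam (m + 1) * (x - σ)) * Real.exp (lam m * x) :=
        mul_le_mul_of_nonneg_right hbound (Real.exp_nonneg _)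
    _ = C * Real.exp (lam (m + 1) * σ) * Real.exp (-(lam (m + 1) - lam m) * x) := by
        rw [mul_assoc, mul_assoc, ← Real.exp_add, ← Real.exp_add]
        congr 2
        ring

end Dirichlet

theorem eqOn_zero_of_mul_eq_zero {G g : ℂ → ℂ} {U : Set ℂ} (hG : Differentiable ℂ G)
    (hGne : ∃ s, G s ≠ 0) (hU : IsOpen U) (hg : ContinuousOn g U)
    (hmul : ∀ s ∈ U, G s * g s = 0) : ∀ s ∈ U, g s = 0 := by
  intro z hz
  by_contra hgz
  obtain ⟨s₀, hs₀⟩ := hGne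
  have hG0 : G =ᶠ[𝓝 z] 0 := by
    filter_upwards [(hg.continuousAt (hU.mem_nhds hz)).eventually_ne hgz, hU.mem_nhds hz]
      with w hw hwU
    exact (mul_eq_zero.1 (hmul w hwU)).resolve_right hw
  exact hs₀ <| (hG.differentiableOn.analyticOnNhd isOpen_univ)
    |>.eqOn_zero_of_preconnected_of_eventuallyEq_zero isPreconnected_univ (mem_univ z) hG0
      (mem_univ s₀)

theorem stmt6_general (a : ℕ → ℂ) (lam : ℕ → ℝ)
    (hpos : 0 < lam 0) (hmono : StrictMono lam)
    (σb : ℝ) (hconv : Summable fun n => ‖a n‖ * Real.exp (-(lam n) * σb))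
    (hnonconst : ∃ n, a n ≠ 0)
    (F G : ℂ → ℂ) (hF : Differentiable ℂ F) (hG : Differentiable ℂ G)
    (hGne : ∃ s, G s ≠ 0)
    (hquot : ∀ s : ℂ, σb < s.re →
      G s * (1 + ∑' n, a n * Complex.exp (-(lam n : ℂ) * s)) = F s)
    (A : ℝ) (α : ℝ) (hα : 0 ≤ α)
    (hFgrowth : ∀ s : ℂ, ‖F s‖ ≤ Real.exp (A * (1 + ‖s‖) ^ α))
    (hGgrowth : ∀ s : ℂ, ‖G s‖ ≤ Real.exp (A * (1 + ‖s‖) ^ α)) :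
    1 ≤ α := by
  by_contra! hα₁
  have hlam : ∀ n, lam 0 ≤ lam n := fun n => hmono.monotone (Nat.zero_le n)
  have hsub : ∀ s, σb < s.re → F s - G s = G s * dirichletSum a lam s := fun s hs => by
    rw [← hquot s hs, dirichletSum]; ring
  set C := ∑' n, ‖a n‖ * Real.exp (-(lam n) * σb)
  have hdecay : ∀ s : ℂ, σb < s.re → ‖F s - G s‖ ≤
      C * Real.exp (lam 0 * σb) * Real.exp (A * (1 + ‖s‖) ^ α - lam 0 * s.re) := fun s hs =>
    calc ‖F s - G s‖ ≤ Real.exp (A * (1 + ‖s‖) ^ α) * (C * Real.exp (-lam 0 * (s.re - σb))) := by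
          rw [hsub s hs, norm_mul]
          exact mul_le_mul (hGgrowth s) (norm_dirichletSum_le hconv (fun n _ => hlam n) hs.le)
            (norm_nonneg _) (Real.exp_nonneg _)
      _ = _ := by rw [mul_assoc, ← Real.exp_add, mul_left_comm, ← Real.exp_add]; ring_nf
  have hFG : F - G = 0 := eq_zero_of_growth_of_exp_decay (hF.sub hG) (B := 2) hα hα₁
    (fun s => (norm_sub_le _ _).trans (by linarith [hFgrowth s, hGgrowth s])) hpos
    (by positivity) hdecay
  have hzero : ∀ s ∈ {s : ℂ | σb < s.re}, dirichletSum a lam s = 0 :=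
    eqOn_zero_of_mul_eq_zero hG hGne (isOpen_lt continuous_const continuous_re)
      ((continuousOn_dirichletSum (fun n => hpos.le.trans (hlam n)) hconv).mono
        fun s (hs : σb < s.re) => hs.le)
      fun s hs => by rw [← hsub s hs]; exact congr_fun hFG s
  obtain ⟨n, hn⟩ := hnonconst
  refine hn (coeff_eq_zero_of_dirichletSum_eq_zero hmono hconv (fun x hx => ?_) n)
  exact hzero x (by simpa using hx)

/-- A non-constant Dirichlet series f(s) = 1 + ∑ aₙ e^{−λₙ s} has order
o(f) ≥ 1: if f = F/G with F, G entire satisfying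
‖F(s)‖, ‖G(s)‖ ≤ exp(A(1+‖s‖)^α), then α ≥ 1. -/
theorem stmt6 (a : ℕ → ℂ) (lam : ℕ → ℝ)
    (hpos : 0 < lam 0) (hmono : StrictMono lam)
    (htend : Filter.Tendsto lam Filter.atTop Filter.atTop)
    (σb : ℝ) (hconv : Summable fun n => ‖a n‖ * Real.exp (-(lam n) * σb))
    (hnonconst : ∃ n, a n ≠ 0)
    (F G : ℂ → ℂ) (hF : Differentiable ℂ F) (hG : Differentiable ℂ G)
    (hGne : ∃ s, G s ≠ 0)
    (hquot : ∀ s : ℂ, σb < s.re →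
      G s * (1 + ∑' n, a n * Complex.exp (-(lam n : ℂ) * s)) = F s)
    (A : ℝ) (hA : 0 < A) (α : ℝ) (hα : 0 ≤ α)
    (hFgrowth : ∀ s : ℂ, ‖F s‖ ≤ Real.exp (A * (1 + ‖s‖) ^ α))
    (hGgrowth : ∀ s : ℂ, ‖G s‖ ≤ Real.exp (A * (1 + ‖s‖) ^ α)) :
    1 ≤ α :=
  stmt6_general a lam hpos hmono σb hconv hnonconst F G hF hG hGne hquot A α hα hFgrowth hGgrowth
end

section
/- Let ρ be a nonzero complex number with Re ρ ≤ 0, let d ≥ 1 be an integer, and let φ : ℝ → ℂ be a smooth compactly supported function. Then (−1)^d ∫₀^∞ (e^{ρt} − 1) φ^{(d)}(t) dt = ρ^d ∫₀^∞ e^{ρt} φ(t) dt + ∑_{l=0}^{d−2} (−1)^l ρ^{d−1−l} φ^{(l)}(0), where φ^{(l)} denotes the l-th derivative and the sum is empty when d = 1. -/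
open Complex MeasureTheory
open Set Filter Topology

lemma expDeriv (ρ : ℂ) (t : ℝ) :
    HasDerivAt (fun t : ℝ => Complex.exp (ρ * t)) (ρ * Complex.exp (ρ * t)) t := by
  have h1 : HasDerivAt (fun t : ℝ => (ρ * t : ℂ)) ρ t := by
    simpa using (Complex.ofRealCLM.hasDerivAt (x := t)).const_mul ρ
  simpa [mul_comm] using h1.cexp

lemma parts (ρ : ℂ) (hρre : ρ.re ≤ 0) (c : ℂ) (ψ : ℝ → ℂ) (hψ : ContDiff ℝ (⊤ : ℕ∞) ψ)
    (hψc : HasCompactSupport ψ) :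
    ∫ t in Set.Ioi (0 : ℝ), (Complex.exp (ρ * t) + c) * deriv ψ t =
      -((1 + c) * ψ 0) - ρ * ∫ t in Set.Ioi (0 : ℝ), Complex.exp (ρ * t) * ψ t := by
  set F : ℝ → ℂ := fun t => (Complex.exp (ρ * t) + c) * ψ t with hF
  have hψd : Differentiable ℝ ψ := hψ.differentiable (by simp)
  have hcψ : Continuous ψ := hψ.continuous
  have hcψ' : Continuous (deriv ψ) := (hψ.continuous_deriv (by exact_mod_cast le_top))
  have hFd : ∀ t : ℝ, HasDerivAt F
      (ρ * Complex.exp (ρ * t) * ψ t + (Complex.exp (ρ * t) + c) * deriv ψ t) t := by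
    intro t
    exact ((expDeriv ρ t).add_const c).mul (hψd t).hasDerivAt
  have hint1 : Integrable (fun t : ℝ => ρ * Complex.exp (ρ * t) * ψ t) := by
    apply Continuous.integrable_of_hasCompactSupport
    · exact (continuous_const.mul (Complex.continuous_exp.comp (by continuity))).mul hcψ
    · exact (HasCompactSupport.mul_left hψc : HasCompactSupport
        (fun t : ℝ => (ρ * Complex.exp (ρ * t)) * ψ t))
  have hint2 : Integrable (fun t : ℝ => (Complex.exp (ρ * t) + c) * deriv ψ t) := by
    apply Continuous.integrable_of_hasCompactSupport
    · exact ((Complex.continuous_exp.comp (by continuity)).add continuous_const).mul hcψ'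
    · exact (HasCompactSupport.mul_left (hψc.deriv) : HasCompactSupport
        (fun t : ℝ => (Complex.exp (ρ * t) + c) * deriv ψ t))
  have hint3 : Integrable (fun t : ℝ => Complex.exp (ρ * t) * ψ t) := by
    apply Continuous.integrable_of_hasCompactSupport
    · exact (Complex.continuous_exp.comp (by continuity)).mul hcψ
    · exact (HasCompactSupport.mul_left hψc : HasCompactSupport
        (fun t : ℝ => Complex.exp (ρ * t) * ψ t))
  have htend : Tendsto F atTop (𝓝 0) := by
    have h0 : Tendsto ψ atTop (𝓝 0) := hψc.is_zero_at_infty.mono_left atTop_le_cocompact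
    have hbdd : ∀ᶠ t : ℝ in atTop, ‖Complex.exp (ρ * t) + c‖ ≤ 1 + ‖c‖ := by
      filter_upwards [eventually_ge_atTop (0 : ℝ)] with t ht
      calc ‖Complex.exp (ρ * t) + c‖ ≤ ‖Complex.exp (ρ * t)‖ + ‖c‖ := norm_add_le _ _
        _ ≤ 1 + ‖c‖ := by
          have : ‖Complex.exp (ρ * t)‖ = Real.exp (ρ.re * t) := by
            rw [Complex.norm_exp]
            congr 1
            simp [Complex.mul_re]
          rw [this]
          have : ρ.re * t ≤ 0 := mul_nonpos_of_nonpos_of_nonneg hρre ht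
          linarith [Real.exp_le_one_iff.mpr this]
    have := h0.norm
    have hn : Tendsto (fun t => ‖F t‖) atTop (𝓝 0) := by
      apply squeeze_zero' (.of_forall fun t => norm_nonneg _)
      · filter_upwards [hbdd] with t ht
        calc ‖F t‖ = ‖Complex.exp (ρ * t) + c‖ * ‖ψ t‖ := norm_mul _ _
          _ ≤ (1 + ‖c‖) * ‖ψ t‖ := by
            exact mul_le_mul_of_nonneg_right ht (norm_nonneg _)
      · simpa using (h0.norm.const_mul (1 + ‖c‖))
    exact tendsto_zero_iff_norm_tendsto_zero.mpr hn
  have key := integral_Ioi_of_hasDerivAt_of_tendsto (a := (0:ℝ))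
    (f := F)
    (f' := fun t => ρ * Complex.exp (ρ * t) * ψ t + (Complex.exp (ρ * t) + c) * deriv ψ t)
    (((expDeriv ρ 0).add_const c).mul (hψd 0).hasDerivAt).continuousAt.continuousWithinAt
    (fun x _ => hFd x) (hint1.add hint2).integrableOn htend
  rw [integral_add hint1.integrableOn hint2.integrableOn] at key
  have hF0 : F 0 = (1 + c) * ψ 0 := by simp [hF]
  rw [hF0] at key
  have h1 : ∫ t in Set.Ioi (0:ℝ), ρ * Complex.exp (ρ * t) * ψ t
      = ρ * ∫ t in Set.Ioi (0:ℝ), Complex.exp (ρ * t) * ψ t := by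
    rw [← integral_const_mul]; congr 1; ext t; ring
  rw [h1] at key
  linear_combination key

theorem stmt8' (ρ : ℂ) (hρre : ρ.re ≤ 0) (d : ℕ) (hd : 1 ≤ d)
    (φ : ℝ → ℂ) (hφ : ContDiff ℝ (⊤ : ℕ∞) φ) (hφc : HasCompactSupport φ) :
    (-1 : ℂ) ^ d * ∫ t in Set.Ioi (0 : ℝ),
        (Complex.exp (ρ * t) - 1) * iteratedDeriv d φ t =
      ρ ^ d * (∫ t in Set.Ioi (0 : ℝ), Complex.exp (ρ * t) * φ t) +
        ∑ l ∈ Finset.range (d - 1),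
          (-1 : ℂ) ^ l * ρ ^ (d - 1 - l) * iteratedDeriv l φ 0 := by
  induction d, hd using Nat.le_induction generalizing φ with
  | base =>
    have h := parts ρ hρre (-1) φ hφ hφc
    simp only [pow_one, Finset.range_zero, Finset.sum_empty, add_zero, iteratedDeriv_one,
      sub_eq_add_neg] at *
    rw [h]; ring
  | succ d hd ih =>
    have hφ' : ContDiff ℝ (⊤ : ℕ∞) (deriv φ) := by
      have := (contDiff_infty_iff_deriv.mp (hφ.of_le (by exact_mod_cast le_top))).2
      exact_mod_cast this
    have hφc' : HasCompactSupport (deriv φ) := hφc.deriv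
    have key := ih (deriv φ) hφ' hφc'
    have h2 := parts ρ hρre 0 φ hφ hφc
    simp only [add_zero, iteratedDeriv_one] at h2
    have hiter : ∀ n : ℕ, iteratedDeriv n (deriv φ) = iteratedDeriv (n + 1) φ := by
      intro n; rw [iteratedDeriv_succ']
    simp only [hiter] at key
    have hsum : ∑ l ∈ Finset.range (d + 1 - 1),
          (-1 : ℂ) ^ l * ρ ^ (d + 1 - 1 - l) * iteratedDeriv l φ 0
        = -(∑ l ∈ Finset.range (d - 1),
            (-1 : ℂ) ^ l * ρ ^ (d - 1 - l) * iteratedDeriv (l+1) φ 0) + ρ ^ d * φ 0 := by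
      rw [show d + 1 - 1 = (d - 1) + 1 from by omega, Finset.sum_range_succ']
      have hc : ∀ i ∈ Finset.range (d - 1),
          (-1 : ℂ) ^ (i+1) * ρ ^ (d - 1 + 1 - (i+1)) * iteratedDeriv (i+1) φ 0
            = -((-1 : ℂ) ^ i * ρ ^ (d - 1 - i) * iteratedDeriv (i+1) φ 0) := by
        intro i hi
        rw [show d - 1 + 1 - (i+1) = d - 1 - i from by omega, pow_succ]
        ring
      rw [Finset.sum_congr rfl hc, ← Finset.sum_neg_distrib]
      congr 1
      rw [show d - 1 + 1 - 0 = d from by omega]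
      simp
    rw [hsum]
    linear_combination (-1 : ℂ) * key - ρ ^ d * h2

/-- The distributional identity
D^d((e^{ρt}−1)·1_{ℝ₊}) = ρ^d e^{ρt} 1_{ℝ₊} + ∑_{l=0}^{d−2} ρ^{d−1−l} δ₀^{(l)},
tested against a smooth compactly supported function φ. -/
theorem stmt8 (ρ : ℂ) (hρ0 : ρ ≠ 0) (hρre : ρ.re ≤ 0) (d : ℕ) (hd : 1 ≤ d)
    (φ : ℝ → ℂ) (hφ : ContDiff ℝ (⊤ : ℕ∞) φ) (hφc : HasCompactSupport φ) :
    (-1 : ℂ) ^ d * ∫ t in Set.Ioi (0 : ℝ),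
        (Complex.exp (ρ * t) - 1) * iteratedDeriv d φ t =
      ρ ^ d * (∫ t in Set.Ioi (0 : ℝ), Complex.exp (ρ * t) * φ t) +
        ∑ l ∈ Finset.range (d - 1),
          (-1 : ℂ) ^ l * ρ ^ (d - 1 - l) * iteratedDeriv l φ 0 :=
  stmt8' ρ hρre d hd φ (hφ.of_le (by simp)) hφc
end

section
/- Let f(s) = 1 + ∑_{n≥1} aₙ e^{−λₙ s} be a Dirichlet series and let s ∈ ℂ be such that ∑_{n≥1} |aₙ| e^{−λₙ Re s} < 1. Then the family, indexed by the finitely supported sequences 𝐤 = (kₙ)_{n≥1} of natural numbers with ‖𝐤‖ = ∑ₙ kₙ ≥ 1, of terms b_𝐤 e^{−⟨λ,𝐤⟩ s} with b_𝐤 = ((−1)^{‖𝐤‖}/‖𝐤‖) · (‖𝐤‖!/∏ⱼ kⱼ!) · ∏ⱼ aⱼ^{kⱼ} and ⟨λ,𝐤⟩ = ∑ₙ λₙ kₙ, is absolutely summable, and its sum equals −log f(s), where log denotes the principal branch of the complex logarithm. -/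
/-!
With `cₙ = aₙ e^{−λₙ s}`, the `𝐤`-th term is `(−1)^‖𝐤‖ / ‖𝐤‖` times the multinomial term of `𝐤`
in the expansion of `(∑ cₙ)^‖𝐤‖`. Since `∑ |cₙ| < 1`, the family is absolutely summable and may be
grouped by `m = ‖𝐤‖`: each group sums to `(∑ cₙ)^m` by the multinomial theorem, leaving the series
`∑_{m ≥ 1} (−1)^m (∑ cₙ)^m / m = −log (1 + ∑ cₙ)`.
-/

open Complex

/-- The total degree ‖𝐤‖ = ∑ₙ kₙ of a finitely supported sequence of naturals. -/
def kNorm (k : ℕ →₀ ℕ) : ℕ := k.sum fun _ v => v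

/-- The coefficient b_𝐤 = ((−1)^‖𝐤‖/‖𝐤‖)·(‖𝐤‖!/∏ⱼ kⱼ!)·∏ⱼ aⱼ^{kⱼ}. -/
noncomputable def bcoef (a : ℕ → ℂ) (k : ℕ →₀ ℕ) : ℂ :=
  ((-1 : ℂ) ^ (kNorm k) / (kNorm k : ℂ)) *
    ((Nat.factorial (kNorm k) : ℂ) /
      ∏ j ∈ k.support, (Nat.factorial (k j) : ℂ)) *
    ∏ j ∈ k.support, a j ^ k j

/-- The pairing ⟨λ,𝐤⟩ = ∑ₙ λₙ kₙ. -/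
def lamPair (lam : ℕ → ℝ) (k : ℕ →₀ ℕ) : ℝ := k.sum fun n v => lam n * v

open Finset Filter Topology

section Multinomial

variable {ι R : Type*}

noncomputable def multinomialTerm [CommSemiring R] (c : ι → R) (k : ι →₀ ℕ) : R :=
  k.multinomial * k.prod fun j n => c j ^ n

lemma multinomialTerm_of_support_subset [CommSemiring R] (c : ι → R) {k : ι →₀ ℕ}
    {s : Finset ι} (h : k.support ⊆ s) :
    multinomialTerm c k = Nat.multinomial s k * ∏ i ∈ s, c i ^ k i := by
  rw [multinomialTerm, Finsupp.multinomial_of_support_subset h,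
    Finsupp.prod_of_support_subset k h _ fun _ _ => pow_zero _]

lemma multinomialTerm_nonneg {c : ι → ℝ} (hc : ∀ i, 0 ≤ c i) (k : ι →₀ ℕ) :
    0 ≤ multinomialTerm c k :=
  mul_nonneg (Nat.cast_nonneg _) (prod_nonneg fun j _ => pow_nonneg (hc j) _)

theorem sum_pow_eq_sum_finsuppAntidiag [CommSemiring R] [DecidableEq ι] (s : Finset ι)
    (c : ι → R) (m : ℕ) :
    (∑ i ∈ s, c i) ^ m = ∑ k ∈ s.finsuppAntidiag m, multinomialTerm c k := by
  rw [sum_pow_eq_sum_piAntidiag, finsuppAntidiag, sum_map, ← sum_attach]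
  refine sum_congr rfl fun f _ => ?_
  rw [multinomialTerm_of_support_subset]
  · rfl
  · exact fun i hi => (mem_filter.1 hi).1

lemma mem_finsuppAntidiag_iff_degree_eq [DecidableEq ι] {k : ι →₀ ℕ} {s : Finset ι} {m : ℕ} :
    k ∈ s.finsuppAntidiag m ↔ k.degree = m ∧ k.support ⊆ s := by
  rw [mem_finsuppAntidiag', Finsupp.degree_apply, Finsupp.sum]

lemma summable_multinomialTerm_of_nonneg {c : ι → ℝ} (hc0 : ∀ i, 0 ≤ c i) (hc : Summable c)
    (m : ℕ) : Summable fun k : {k : ι →₀ ℕ // k.degree = m} => multinomialTerm c k := by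
  classical
  refine summable_of_sum_le (c := (∑' i, c i) ^ m) (fun k => multinomialTerm_nonneg hc0 _)
    fun u => ?_
  set t := u.sup fun k => k.1.support
  have hsub : u.map (Function.Embedding.subtype _) ⊆ t.finsuppAntidiag m := by
    simp only [subset_iff, Finset.mem_map, Function.Embedding.subtype_apply]
    rintro _ ⟨k, hk, rfl⟩
    exact mem_finsuppAntidiag_iff_degree_eq.2 ⟨k.2, le_sup (f := fun k => k.1.support) hk⟩
  calc ∑ k ∈ u, multinomialTerm c k
      = ∑ k ∈ u.map (Function.Embedding.subtype _), multinomialTerm c k :=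
        by rw [sum_map]; rfl
    _ ≤ ∑ k ∈ t.finsuppAntidiag m, multinomialTerm c k :=
        sum_le_sum_of_subset_of_nonneg hsub fun _ _ _ => multinomialTerm_nonneg hc0 _
    _ = (∑ i ∈ t, c i) ^ m := (sum_pow_eq_sum_finsuppAntidiag ..).symm
    _ ≤ (∑' i, c i) ^ m :=
        pow_le_pow_left₀ (sum_nonneg fun i _ => hc0 i) (hc.sum_le_tsum t fun i _ => hc0 i) m

variable [NormedCommRing R] [NormOneClass R]

lemma norm_multinomialTerm_le (c : ι → R) (k : ι →₀ ℕ) :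
    ‖multinomialTerm c k‖ ≤ multinomialTerm (‖c ·‖) k := by
  refine (norm_mul_le _ _).trans (mul_le_mul ?_ ?_ (norm_nonneg _) (Nat.cast_nonneg _))
  · simpa using Nat.norm_cast_le (α := R) k.multinomial
  · exact (Finset.norm_prod_le _ _).trans
      (prod_le_prod (fun _ _ => norm_nonneg _) fun j _ => norm_pow_le _ _)

variable {c : ι → R}

theorem hasSum_multinomialTerm [CompleteSpace R] (hc : Summable (‖c ·‖)) (m : ℕ) :
    HasSum (fun k : {k : ι →₀ ℕ // k.degree = m} => multinomialTerm c k) ((∑' i, c i) ^ m) := by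
  classical
  have hsumm : Summable fun k : {k : ι →₀ ℕ // k.degree = m} => multinomialTerm c k :=
    (summable_multinomialTerm_of_nonneg (fun i => norm_nonneg _) hc m).of_norm_bounded
      fun k => norm_multinomialTerm_le c k
  let A : Finset ι → Finset {k : ι →₀ ℕ // k.degree = m} :=
    fun s => (s.finsuppAntidiag m).subtype _
  have hA : Tendsto A atTop atTop :=
    tendsto_atTop_finset_of_monotone (fun s t hst => subtype_mono (finsuppAntidiag_mono hst m))
      fun k => ⟨k.1.support, mem_subtype.2 (mem_finsuppAntidiag_iff_degree_eq.2 ⟨k.2, subset_rfl⟩)⟩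
  have hpartial : ∀ s, ∑ k ∈ A s, multinomialTerm c k = (∑ i ∈ s, c i) ^ m := fun s => by
    rw [sum_pow_eq_sum_finsuppAntidiag]
    exact sum_subtype_of_mem (multinomialTerm c) fun k hk =>
      (mem_finsuppAntidiag_iff_degree_eq.1 hk).1
  have hlim := hsumm.hasSum.comp hA
  simp only [Function.comp_def, hpartial] at hlim
  rw [← tendsto_nhds_unique hlim (hc.of_norm.hasSum.pow m)]
  exact hsumm.hasSum

theorem hasSum_mul_multinomialTerm_fiber [CompleteSpace R] (hc : Summable (‖c ·‖)) (w : ℕ → R)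
    (m : ℕ) :
    HasSum (fun k : {k : ι →₀ ℕ // k.degree = m} => w k.1.degree * multinomialTerm c k)
      (w m * (∑' i, c i) ^ m) := by
  have hw : (fun k : {k : ι →₀ ℕ // k.degree = m} => w k.1.degree * multinomialTerm c k) =
      fun k : {k : ι →₀ ℕ // k.degree = m} => w m * multinomialTerm c k :=
    funext fun k => by rw [k.2]
  rw [hw]
  exact (hasSum_multinomialTerm hc m).mul_left (w m)

theorem summable_norm_mul_multinomialTerm {w : ℕ → R} (hc : Summable (‖c ·‖))
    (hw : Summable fun m => ‖w m‖ * (∑' i, ‖c i‖) ^ m) :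
    Summable fun k : ι →₀ ℕ => ‖w k.degree * multinomialTerm c k‖ := by
  have hc' : Summable fun i => ‖‖c i‖‖ := by simpa only [norm_norm] using hc
  have hfiber := hasSum_mul_multinomialTerm_fiber hc' (‖w ·‖)
  have hbound : Summable fun k : ι →₀ ℕ => ‖w k.degree‖ * multinomialTerm (‖c ·‖) k := by
    refine (Equiv.sigmaFiberEquiv Finsupp.degree).summable_iff.1
      ((summable_sigma_of_nonneg fun _ => ?_).2 ⟨fun m => (hfiber m).summable, ?_⟩)
    · exact mul_nonneg (norm_nonneg _) (multinomialTerm_nonneg (fun _ => norm_nonneg _) _)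
    · exact hw.congr fun m => (hfiber m).tsum_eq.symm
  exact hbound.of_nonneg_of_le (fun _ => norm_nonneg _) fun k => (norm_mul_le _ _).trans
    (mul_le_mul_of_nonneg_left (norm_multinomialTerm_le c k) (norm_nonneg _))

theorem hasSum_mul_multinomialTerm [CompleteSpace R] {w : ℕ → R} (hc : Summable (‖c ·‖))
    (hw : Summable fun m => ‖w m‖ * (∑' i, ‖c i‖) ^ m) :
    HasSum (fun k : ι →₀ ℕ => w k.degree * multinomialTerm c k)
      (∑' m, w m * (∑' i, c i) ^ m) := by
  have hsumm := (summable_norm_mul_multinomialTerm hc hw).of_norm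
  have hsigma := ((Equiv.sigmaFiberEquiv Finsupp.degree).hasSum_iff.2 hsumm.hasSum).sigma
    (hasSum_mul_multinomialTerm_fiber hc w)
  rw [hsigma.tsum_eq]
  exact hsumm.hasSum

end Multinomial

lemma hasSum_neg_one_pow_div_mul_pow {z : ℂ} (hz : ‖z‖ < 1) :
    HasSum (fun m : ℕ => (-1) ^ m / m * z ^ m) (-log (1 + z)) := by
  have h : (fun m : ℕ => (-1 : ℂ) ^ m / m * z ^ m) =
      fun m : ℕ => -((-1) ^ (m + 1) * z ^ m / m) :=
    funext fun m => by ring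
  rw [h]
  exact (hasSum_taylorSeries_log hz).neg

lemma summable_norm_neg_one_pow_div_mul_pow {r : ℝ} (hr0 : 0 ≤ r) (hr1 : r < 1) :
    Summable fun m : ℕ => ‖(-1 : ℂ) ^ m / m‖ * r ^ m := by
  refine (summable_geometric_of_lt_one hr0 hr1).of_nonneg_of_le
    (fun m => by positivity) fun m => mul_le_of_le_one_left (by positivity) ?_
  rw [norm_div, norm_pow, norm_neg, norm_one, one_pow, Complex.norm_natCast, one_div]
  exact Nat.cast_inv_le_one m

lemma kNorm_eq_degree (k : ℕ →₀ ℕ) : kNorm k = k.degree := rfl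

lemma factorial_div_prod_factorial_eq_multinomial (k : ℕ →₀ ℕ) :
    (Nat.factorial (kNorm k) : ℂ) / ∏ j ∈ k.support, (Nat.factorial (k j) : ℂ) =
      k.multinomial := by
  rw [div_eq_iff (prod_ne_zero_iff.2 fun j _ => Nat.cast_ne_zero.2 (Nat.factorial_ne_zero _)),
    ← Nat.cast_prod, ← Nat.cast_mul, mul_comm, Finsupp.multinomial_eq, Nat.multinomial_spec]
  rfl

lemma exp_neg_lamPair_mul (lam : ℕ → ℝ) (s : ℂ) (k : ℕ →₀ ℕ) :
    exp (-(lamPair lam k : ℂ) * s) = k.prod fun j n => exp (-(lam j : ℂ) * s) ^ n := by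
  simp only [lamPair, Finsupp.sum, Finsupp.prod, ← exp_nat_mul, ← exp_sum]
  push_cast
  rw [← sum_neg_distrib, sum_mul]
  exact congrArg exp (sum_congr rfl fun j _ => by ring)

lemma bcoef_mul_exp_neg_lamPair_mul (a : ℕ → ℂ) (lam : ℕ → ℝ) (s : ℂ) (k : ℕ →₀ ℕ) :
    bcoef a k * exp (-(lamPair lam k : ℂ) * s) =
      (-1) ^ k.degree / k.degree * multinomialTerm (fun n => a n * exp (-(lam n : ℂ) * s)) k := by
  rw [bcoef, factorial_div_prod_factorial_eq_multinomial, exp_neg_lamPair_mul, multinomialTerm,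
    kNorm_eq_degree, mul_assoc, mul_assoc, Finsupp.prod, Finsupp.prod, ← prod_mul_distrib]
  simp only [mul_pow]

theorem stmt12_general (a : ℕ → ℂ) (lam : ℕ → ℝ)
    (s : ℂ)
    (hs : Summable fun n => ‖a n‖ * Real.exp (-(lam n) * s.re))
    (hs1 : (∑' n, ‖a n‖ * Real.exp (-(lam n) * s.re)) < 1) :
    Summable (fun k : {k : ℕ →₀ ℕ // k ≠ 0} =>
      ‖bcoef a k.1 * Complex.exp (-(lamPair lam k.1 : ℂ) * s)‖) ∧
    (∑' k : {k : ℕ →₀ ℕ // k ≠ 0},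
        bcoef a k.1 * Complex.exp (-(lamPair lam k.1 : ℂ) * s)) =
      -Complex.log (1 + ∑' n, a n * Complex.exp (-(lam n : ℂ) * s)) := by
  set c : ℕ → ℂ := fun n => a n * exp (-(lam n : ℂ) * s)
  have hnorm : ∀ n, ‖c n‖ = ‖a n‖ * Real.exp (-(lam n) * s.re) := fun n => by
    simp [c, norm_exp]
  have hc : Summable (‖c ·‖) := by simpa only [hnorm] using hs
  have hc1 : ∑' n, ‖c n‖ < 1 := by simpa only [hnorm] using hs1
  have hw := summable_norm_neg_one_pow_div_mul_pow (tsum_nonneg fun n => norm_nonneg (c n)) hc1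
  simp only [bcoef_mul_exp_neg_lamPair_mul]
  refine ⟨(summable_norm_mul_multinomialTerm hc hw).subtype _, ?_⟩
  -- At `k = 0` the weight is `(-1) ^ 0 / 0 = 0` (Lean's `1 / 0 = 0`), so `k = 0` may be added.
  have hsupp : Function.support (fun k : ℕ →₀ ℕ => (-1 : ℂ) ^ k.degree / k.degree *
      multinomialTerm c k) ⊆ {k | k ≠ 0} := fun k hk hk0 => hk (by simp [hk0])
  refine (tsum_subtype_eq_of_support_subset hsupp).trans ?_
  rw [(hasSum_mul_multinomialTerm hc hw).tsum_eq]
  exact (hasSum_neg_one_pow_div_mul_pow ((norm_tsum_le_tsum_norm hc).trans_lt hc1)).tsum_eq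

/-- Expansion of −log f(s) for a Dirichlet series f(s) = 1 + ∑ aₙ e^{−λₙ s}
at a point s with ∑ |aₙ| e^{−λₙ Re s} < 1: the family b_𝐤 e^{−⟨λ,𝐤⟩ s} over
finitely supported 𝐤 ≠ 0 is absolutely summable with sum −log f(s). -/
theorem stmt12 (a : ℕ → ℂ) (lam : ℕ → ℝ)
    (hpos : 0 < lam 0) (hmono : StrictMono lam)
    (htend : Filter.Tendsto lam Filter.atTop Filter.atTop)
    (σb : ℝ) (hconv : Summable fun n => ‖a n‖ * Real.exp (-(lam n) * σb))
    (s : ℂ)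
    (hs : Summable fun n => ‖a n‖ * Real.exp (-(lam n) * s.re))
    (hs1 : (∑' n, ‖a n‖ * Real.exp (-(lam n) * s.re)) < 1) :
    Summable (fun k : {k : ℕ →₀ ℕ // k ≠ 0} =>
      ‖bcoef a k.1 * Complex.exp (-(lamPair lam k.1 : ℂ) * s)‖) ∧
    (∑' k : {k : ℕ →₀ ℕ // k ≠ 0},
        bcoef a k.1 * Complex.exp (-(lamPair lam k.1 : ℂ) * s)) =
      -Complex.log (1 + ∑' n, a n * Complex.exp (-(lam n : ℂ) * s)) :=
  stmt12_general a lam s hs hs1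
end

section
/- For every complex number s with c = Re s > 0, one has ‖∫₀^∞ (s/(s² + t²)) · (t/(e^{2πt} − 1)) dt‖ ≤ 1/(24 c). In particular, for every real t ≥ 0 and s with Re s = c > 0 one has |s/(s² + t²)| ≤ 1/c. -/
/-!
Partial fractions give `s / (s² + t²) = ((s + it)⁻¹ + (s - it)⁻¹) / 2`, and both factors have real
part `Re s`, so `|s / (s² + t²)| ≤ 1 / Re s`. Integrating against the positive weight
`t / (e^{2πt} - 1)` then bounds the integral by `1 / Re s` times the weight's total mass, which is
computed by expanding the weight as the geometric series `∑ₙ t e^{-2π(n+1)t}` and integrating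
termwise: `∑ₙ (2π(n+1))⁻² = ζ(2) / (4π²) = 1 / 24`.
-/

open Complex Real MeasureTheory Set

lemma Complex.norm_inv_le_inv_re {z : ℂ} (hz : 0 < z.re) : ‖z⁻¹‖ ≤ z.re⁻¹ := by
  rw [norm_inv]
  exact inv_anti₀ hz (re_le_norm z)

lemma Complex.norm_div_sq_add_sq_le {s : ℂ} (hs : 0 < s.re) (t : ℝ) :
    ‖s / (s ^ 2 + (t : ℂ) ^ 2)‖ ≤ 1 / s.re := by
  have hre₁ : (s + t * I).re = s.re := by simp
  have hre₂ : (s - t * I).re = s.re := by simp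
  have hne₁ : s + t * I ≠ 0 := fun h => hs.ne' (by rw [← hre₁, h, zero_re])
  have hne₂ : s - t * I ≠ 0 := fun h => hs.ne' (by rw [← hre₂, h, zero_re])
  have hsplit : s / (s ^ 2 + (t : ℂ) ^ 2) = ((s + t * I)⁻¹ + (s - t * I)⁻¹) / 2 := by
    have hfactor : s ^ 2 + (t : ℂ) ^ 2 = (s + t * I) * (s - t * I) := by
      ring_nf
      rw [I_sq]
      ring
    rw [hfactor]
    field_simp
    ring
  calc ‖s / (s ^ 2 + (t : ℂ) ^ 2)‖
      ≤ (‖(s + t * I)⁻¹‖ + ‖(s - t * I)⁻¹‖) / 2 := by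
        rw [hsplit, norm_div, Complex.norm_two]
        gcongr
        exact norm_add_le _ _
    _ ≤ (s.re⁻¹ + s.re⁻¹) / 2 := by
        gcongr
        · exact hre₁ ▸ norm_inv_le_inv_re (hre₁ ▸ hs)
        · exact hre₂ ▸ norm_inv_le_inv_re (hre₂ ▸ hs)
    _ = 1 / s.re := by ring

lemma hasSum_mul_exp_neg_mul_succ {a t : ℝ} (ha : 0 < a) (ht : 0 < t) :
    HasSum (fun n : ℕ => t * rexp (-(a * (n + 1) * t))) (t / (rexp (a * t) - 1)) := by
  have hq : rexp (-(a * t)) < 1 := Real.exp_lt_one_iff.mpr (by simp only [neg_lt_zero]; positivity)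
  have hE : 1 < rexp (a * t) := one_lt_exp_iff.mpr (by positivity)
  have h := (hasSum_geometric_of_lt_one (exp_pos _).le hq).mul_left (t * rexp (-(a * t)))
  have hterm (n : ℕ) :
      t * rexp (-(a * t)) * rexp (-(a * t)) ^ n = t * rexp (-(a * (n + 1) * t)) := by
    rw [mul_assoc, ← pow_succ', ← Real.exp_nat_mul]
    push_cast
    ring_nf
  have hsum : t * rexp (-(a * t)) * (1 - rexp (-(a * t)))⁻¹ = t / (rexp (a * t) - 1) := by
    rw [Real.exp_neg]
    field_simp
  simpa only [hterm, hsum] using h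

lemma integral_mul_exp_neg_mul_Ioi {r : ℝ} (hr : 0 < r) :
    ∫ t in Ioi 0, t * rexp (-(r * t)) = 1 / r ^ 2 := by
  have h := integral_rpow_mul_exp_neg_mul_Ioi two_pos hr
  norm_num [Real.Gamma_two] at h
  simpa [div_pow] using h

lemma integrableOn_mul_exp_neg_mul_Ioi {r : ℝ} (hr : 0 < r) :
    IntegrableOn (fun t => t * rexp (-(r * t))) (Ioi 0) :=
  .of_integral_ne_zero (by rw [integral_mul_exp_neg_mul_Ioi hr]; positivity)

lemma hasSum_one_div_mul_succ_sq (a : ℝ) :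
    HasSum (fun n : ℕ => 1 / (a * (n + 1)) ^ 2) (π ^ 2 / (6 * a ^ 2)) := by
  have h := ((hasSum_nat_add_iff' 1).mpr hasSum_zeta_two).mul_left (1 / a ^ 2)
  have hterm (n : ℕ) : 1 / a ^ 2 * (1 / ((n + 1 : ℕ) : ℝ) ^ 2) = 1 / (a * (n + 1)) ^ 2 := by
    rw [one_div_mul_one_div, mul_pow]
    push_cast
    rfl
  have hsum : 1 / a ^ 2 * (π ^ 2 / 6 - ∑ i ∈ Finset.range 1, 1 / (i : ℝ) ^ 2) =
      π ^ 2 / (6 * a ^ 2) := by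
    simp only [Finset.range_one, Finset.sum_singleton, Nat.cast_zero]
    ring
  simpa only [hterm, hsum] using h

lemma integral_div_exp_mul_sub_one {a : ℝ} (ha : 0 < a) :
    ∫ t in Ioi 0, t / (rexp (a * t) - 1) = π ^ 2 / (6 * a ^ 2) := by
  have hr (n : ℕ) : 0 < a * (n + 1) := by positivity
  have hnorm (n : ℕ) :
      ∫ t in Ioi 0, ‖t * rexp (-(a * (n + 1) * t))‖ = 1 / (a * (n + 1)) ^ 2 := by
    rw [← integral_mul_exp_neg_mul_Ioi (hr n)]
    refine setIntegral_congr_fun measurableSet_Ioi fun t ht => ?_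
    exact Real.norm_of_nonneg (mul_nonneg (le_of_lt ht) (exp_pos _).le)
  have h := hasSum_integral_of_summable_integral_norm
    (fun n => integrableOn_mul_exp_neg_mul_Ioi (hr n))
    (by simpa only [hnorm] using (hasSum_one_div_mul_succ_sq a).summable)
  simp only [integral_mul_exp_neg_mul_Ioi (hr _)] at h
  rw [(hasSum_one_div_mul_succ_sq a).unique h]
  exact setIntegral_congr_fun measurableSet_Ioi fun t ht =>
    (hasSum_mul_exp_neg_mul_succ ha ht).tsum_eq.symm

lemma integrableOn_div_exp_mul_sub_one {a : ℝ} (ha : 0 < a) :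
    IntegrableOn (fun t => t / (rexp (a * t) - 1)) (Ioi 0) :=
  .of_integral_ne_zero (by rw [integral_div_exp_mul_sub_one ha]; positivity)

lemma norm_ofReal_div_cexp_mul_sub_one {a t : ℝ} (ha : 0 ≤ a) (ht : 0 ≤ t) :
    ‖(t : ℂ) / (cexp (a * t) - 1)‖ = t / (rexp (a * t) - 1) := by
  have hE : 1 ≤ rexp (a * t) := one_le_exp (by positivity)
  rw [← ofReal_mul, ← ofReal_exp, ← ofReal_one, ← ofReal_sub, ← ofReal_div, norm_real,
    Real.norm_of_nonneg (div_nonneg ht (sub_nonneg.mpr hE))]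

/-- Bound for the error term in Binet's second formula on vertical lines:
for Re s = c > 0, ‖∫₀^∞ (s/(s²+t²))(t/(e^{2πt}−1)) dt‖ ≤ 1/(24c); in
particular |s/(s²+t²)| ≤ 1/c for every t ≥ 0. -/
theorem stmt16 (s : ℂ) (hs : 0 < s.re) :
    ‖∫ t in Set.Ioi (0 : ℝ),
        (s / (s ^ 2 + (t : ℂ) ^ 2)) *
          ((t : ℂ) / (Complex.exp (2 * Real.pi * t) - 1))‖ ≤
      1 / (24 * s.re) ∧
    ∀ t : ℝ, 0 ≤ t → ‖s / (s ^ 2 + (t : ℂ) ^ 2)‖ ≤ 1 / s.re := by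
  refine ⟨?_, fun t _ => norm_div_sq_add_sq_le hs t⟩
  calc _ ≤ ∫ t in Ioi 0, 1 / s.re * (t / (rexp (2 * π * t) - 1)) := by
        refine norm_integral_le_of_norm_le
          ((integrableOn_div_exp_mul_sub_one two_pi_pos).const_mul _) ?_
        filter_upwards [ae_restrict_mem measurableSet_Ioi] with t (ht : 0 < t)
        rw [norm_mul, ← ofReal_ofNat, ← ofReal_mul,
          norm_ofReal_div_cexp_mul_sub_one two_pi_pos.le ht.le]
        gcongr
        · exact div_nonneg ht.le (sub_nonneg.mpr (one_le_exp (by positivity)))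
        · exact norm_div_sq_add_sq_le hs t
    _ = 1 / (24 * s.re) := by
        rw [integral_const_mul, integral_div_exp_mul_sub_one two_pi_pos]
        field_simp
        ring
end

section
/- For every c > 0 there exists a constant C₀ > 0 such that for every real number u with |u| ≥ 1 one has ‖Γ'(c + iu)/Γ(c + iu)‖ ≤ log |u| + C₀, where Γ is the complex Gamma function. Consequently, the vertical order of Γ satisfies m₀(Γ) = 2: the function t ↦ |c + it|^{−2} (Γ'/Γ)(c + it) is integrable on ℝ while t ↦ |c + it|^{−1} (Γ'/Γ)(c + it) is not. -/
open Complex MeasureTheory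

/-!
On the half-plane `0 < re s` the digamma function has the partial-fraction expansion
`ψ s = -γ + ∑ₙ (1 / (n + 1) - 1 / (n + s))`. For real `x > 0` this follows from the convexity of
`log ∘ Γ` (Bohr–Mollerup), which traps `ψ (x + N)` between `log (x + N - 1)` and `log (x + N)`
while `ψ (x + N) - ψ x = ∑_{k < N} 1 / (x + k)`; the identity theorem extends it to the half-plane.
On the line `s = c + iu` the series gives `‖ψ s‖ ≤ log |u| + O(1)`, so `ψ s / |s|²` is
`O(|u| ^ (-3/2))` and integrable, while `re ψ s` grows like a multiple of `log |u|`, so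
`‖ψ s / |s|‖ ≥ 1 / |s|` for large `u`, which is not integrable.
-/

open Filter Topology Finset

local notation "γ" => Real.eulerMascheroniConstant

namespace Real

section LogGamma

variable {x : ℝ}

lemma differentiableAt_log_comp_Gamma (hx : 0 < x) : DifferentiableAt ℝ (log ∘ Gamma) x :=
  (differentiableAt_Gamma fun m ↦ by linarith [m.cast_nonneg (α := ℝ)]).log
    (Gamma_pos_of_pos hx).ne'

lemma log_comp_Gamma_add_one (hx : 0 < x) : (log ∘ Gamma) (x + 1) = (log ∘ Gamma) x + log x := by
  simp only [Function.comp_apply, Gamma_add_one hx.ne', log_mul hx.ne' (Gamma_pos_of_pos hx).ne',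
    add_comm]

lemma deriv_log_comp_Gamma_add_one (hx : 0 < x) :
    deriv (log ∘ Gamma) (x + 1) = deriv (log ∘ Gamma) x + x⁻¹ := by
  rw [← deriv_comp_add_const, ← deriv_log,
    ← deriv_add (differentiableAt_log_comp_Gamma hx) (differentiableAt_log hx.ne')]
  refine EventuallyEq.deriv_eq ?_
  filter_upwards [eventually_gt_nhds hx] using fun y hy ↦ log_comp_Gamma_add_one hy

lemma deriv_log_comp_Gamma_add_nat (hx : 0 < x) (N : ℕ) :
    deriv (log ∘ Gamma) (x + N) = deriv (log ∘ Gamma) x + ∑ k ∈ range N, (x + k)⁻¹ := by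
  induction N with
  | zero => simp
  | succ n ih =>
    rw [Nat.cast_succ, ← add_assoc, deriv_log_comp_Gamma_add_one (by positivity), ih,
      sum_range_succ, add_assoc]

lemma deriv_log_comp_Gamma_le_log (hx : 0 < x) : deriv (log ∘ Gamma) x ≤ log x := by
  refine (convexOn_log_Gamma.deriv_le_slope hx (by positivity : 0 < x + 1) (by linarith)
    (differentiableAt_log_comp_Gamma hx)).trans_eq ?_
  rw [slope_def_field, log_comp_Gamma_add_one hx]
  ring

lemma log_le_deriv_log_comp_Gamma_add_one (hx : 0 < x) :
    log x ≤ deriv (log ∘ Gamma) (x + 1) := by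
  refine le_of_eq_of_le ?_ (convexOn_log_Gamma.slope_le_deriv hx (by positivity : 0 < x + 1)
    (by linarith) (differentiableAt_log_comp_Gamma (by positivity)))
  rw [slope_def_field, log_comp_Gamma_add_one hx]
  ring

lemma tendsto_log_nat_add_sub_log (a : ℝ) :
    Tendsto (fun N : ℕ ↦ log (N + a) - log N) atTop (𝓝 0) := by
  have h : Tendsto (fun N : ℕ ↦ log (1 + a * (N : ℝ)⁻¹)) atTop (𝓝 (log (1 + a * 0))) :=
    ((continuousAt_log (by norm_num)).tendsto.comp
      ((tendsto_inv_atTop_nhds_zero_nat (𝕜 := ℝ)).const_mul a |>.const_add 1))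
  rw [mul_zero, add_zero, log_one] at h
  refine h.congr' ?_
  filter_upwards [eventually_gt_atTop ⌈|a|⌉₊] with N hN
  have hN : |a| < N := (Nat.le_ceil _).trans_lt (by exact_mod_cast hN)
  have hN0 : (0 : ℝ) < N := (abs_nonneg a).trans_lt hN
  rw [← log_div (by linarith [neg_abs_le a]) hN0.ne', add_div, div_self hN0.ne', div_eq_mul_inv]

lemma tendsto_deriv_log_comp_Gamma_add_nat_sub_log (hx : 0 < x) :
    Tendsto (fun N : ℕ ↦ deriv (log ∘ Gamma) (x + N) - log N) atTop (𝓝 0) := by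
  refine tendsto_of_tendsto_of_tendsto_of_le_of_le' (tendsto_log_nat_add_sub_log (x - 1))
    (tendsto_log_nat_add_sub_log x) ?_ (Eventually.of_forall fun N ↦ ?_)
  · filter_upwards [eventually_ge_atTop 1] with N hN
    have h := log_le_deriv_log_comp_Gamma_add_one (x := N + (x - 1))
      (by linarith [(Nat.one_le_cast (α := ℝ)).mpr hN])
    rw [show (N : ℝ) + (x - 1) + 1 = x + N by ring] at h
    linarith
  · have h := deriv_log_comp_Gamma_le_log (x := x + N) (by positivity)
    rw [add_comm (N : ℝ)]
    linarith

lemma tendsto_sum_range_inv_add_one_sub_inv_add (hx : 0 < x) :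
    Tendsto (fun N : ℕ ↦ ∑ n ∈ range N, (((n : ℝ) + 1)⁻¹ - (n + x)⁻¹)) atTop
      (𝓝 (deriv (log ∘ Gamma) x + γ)) := by
  have h := (tendsto_harmonic_sub_log.sub
    (tendsto_deriv_log_comp_Gamma_add_nat_sub_log hx)).const_add (deriv (log ∘ Gamma) x)
  rw [sub_zero] at h
  refine h.congr fun N ↦ ?_
  rw [deriv_log_comp_Gamma_add_nat hx, sum_sub_distrib, harmonic]
  push_cast
  simp only [add_comm x]
  ring

end LogGamma

end Real

section Integrability

variable {E : Type*} [NormedAddCommGroup E]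

lemma integrable_of_norm_le_mul_abs_rpow_neg {f : ℝ → E} (hf : Continuous f) {K r : ℝ}
    (hr : 1 < r) (h : ∀ t : ℝ, 1 ≤ |t| → ‖f t‖ ≤ K * |t| ^ (-r)) : Integrable f := by
  have hK : 0 ≤ K := by simpa using (norm_nonneg _).trans (h 1 (by simp))
  refine hf.locallyIntegrable.integrable_of_isBigO_cocompact
    (g := fun t : ℝ ↦ (1 + ‖t‖) ^ (-r)) ?_
    ((integrable_one_add_norm (by simpa using hr)).integrableAtFilter _)
  refine Asymptotics.IsBigO.of_bound (K * 2 ^ r) ?_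
  filter_upwards [tendsto_norm_cocompact_atTop.eventually_ge_atTop 1] with t ht
  rw [Real.norm_eq_abs] at ht
  have h2t : |t| ^ (-r) = 2 ^ r * (2 * |t|) ^ (-r) := by
    rw [Real.mul_rpow zero_le_two (abs_nonneg t), Real.rpow_neg zero_le_two, ← mul_assoc,
      mul_inv_cancel₀ (by positivity), one_mul]
  rw [Real.norm_eq_abs, abs_of_nonneg (by positivity), mul_assoc]
  refine (h t ht).trans ?_
  rw [h2t]
  refine mul_le_mul_of_nonneg_left (mul_le_mul_of_nonneg_left ?_ (by positivity)) hK
  refine Real.rpow_le_rpow_of_nonpos (by positivity) ?_ (by linarith)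
  rw [Real.norm_eq_abs]
  linarith

lemma not_integrable_of_mul_inv_le_norm {f : ℝ → E} {δ : ℝ} (hδ : 0 < δ)
    (h : ∀ᶠ t in atTop, δ * t⁻¹ ≤ ‖f t‖) : ¬ Integrable f := by
  intro hf
  obtain ⟨T, hT⟩ := eventually_atTop.mp h
  refine not_integrableOn_Ioi_inv (a := max T 0) <|
    (hf.norm.const_mul δ⁻¹).integrableOn.mono' measurable_inv.aestronglyMeasurable ?_
  filter_upwards [ae_restrict_mem measurableSet_Ioi] with t ht
  have ht0 : 0 < t := (le_max_right T 0).trans_lt ht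
  rw [Real.norm_eq_abs, abs_of_pos (inv_pos.mpr ht0), le_inv_mul_iff₀ hδ]
  exact hT t ((le_max_left T 0).trans ht.le)

end Integrability

lemma log_add_div_sq_le_mul_rpow {t C : ℝ} (ht : 1 ≤ t) (hC : 0 ≤ C) :
    (Real.log t + C) / t ^ 2 ≤ (2 + C) * t ^ (-(3 / 2 : ℝ)) := by
  have ht0 : 0 < t := one_pos.trans_le ht
  have hsqrt : 1 ≤ t ^ (1 / 2 : ℝ) := Real.one_le_rpow ht (by norm_num)
  have hlog : Real.log t ≤ 2 * t ^ (1 / 2 : ℝ) := by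
    have := Real.log_le_rpow_div ht0.le (ε := 1 / 2) (by norm_num)
    linarith
  have hpow : t ^ (-(3 / 2 : ℝ)) = t ^ (1 / 2 : ℝ) / t ^ 2 := by
    rw [← Real.rpow_natCast, ← Real.rpow_sub ht0]
    norm_num
  rw [hpow, mul_div_assoc', div_le_div_iff_of_pos_right (by positivity)]
  nlinarith

lemma tsum_inv_natCast_add_add_one_sq_le {N : ℕ} (hN : N ≠ 0) :
    ∑' n : ℕ, ((((n + N : ℕ) : ℝ) + 1) ^ 2)⁻¹ ≤ (N : ℝ)⁻¹ := by
  refine Real.tsum_le_of_sum_range_le (fun _ ↦ by positivity) fun M ↦ ?_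
  have hreindex : ∑ i ∈ range M, ((((i + N : ℕ) : ℝ) + 1) ^ 2)⁻¹ =
      ∑ j ∈ Ioc N (M + N), ((j : ℝ) ^ 2)⁻¹ := by
    rw [range_eq_Ico, ← Ico_add_one_add_one_eq_Ioc, ← zero_add (N + 1), add_assoc,
      ← sum_Ico_add' (fun j : ℕ ↦ ((j : ℝ) ^ 2)⁻¹)]
    push_cast
    simp only [add_assoc]
  rw [hreindex]
  exact (sum_Ioc_inv_sq_le_sub hN (by omega)).trans (sub_le_self _ (by positivity))

namespace Complex

lemma min_one_re_mul_le_norm_natCast_add (s : ℂ) (n : ℕ) :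
    min 1 s.re * (n + 1) ≤ ‖(n : ℂ) + s‖ := by
  have h1 : min 1 s.re ≤ 1 := min_le_left _ _
  have h2 : min 1 s.re ≤ s.re := min_le_right _ _
  have h3 : (n : ℝ) + s.re ≤ ‖(n : ℂ) + s‖ := by simpa using re_le_norm ((n : ℂ) + s)
  nlinarith [n.cast_nonneg (α := ℝ)]

lemma natCast_add_ne_zero {s : ℂ} (hs : 0 < s.re) (n : ℕ) : (n : ℂ) + s ≠ 0 := by
  refine norm_pos_iff.mp ((?_ : 0 < min 1 s.re * (n + 1)).trans_le
    (min_one_re_mul_le_norm_natCast_add s n))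
  positivity

lemma norm_inv_add_one_sub_inv_add {s : ℂ} {n : ℕ} (hs : (n : ℂ) + s ≠ 0) :
    ‖((n : ℂ) + 1)⁻¹ - ((n : ℂ) + s)⁻¹‖ = ‖s - 1‖ / ((n + 1) * ‖(n : ℂ) + s‖) := by
  have h1 : (n : ℂ) + 1 ≠ 0 := by exact_mod_cast n.succ_ne_zero
  rw [inv_sub_inv h1 hs, norm_div, norm_mul, add_sub_add_left_eq_sub]
  norm_cast

lemma norm_inv_add_one_sub_inv_add_le {s : ℂ} (hs : 0 < s.re) (n : ℕ) :
    ‖((n : ℂ) + 1)⁻¹ - ((n : ℂ) + s)⁻¹‖ ≤ ‖s - 1‖ / min 1 s.re * (((n : ℝ) + 1) ^ 2)⁻¹ := by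
  have hm : 0 < min 1 s.re := lt_min one_pos hs
  rw [norm_inv_add_one_sub_inv_add (natCast_add_ne_zero hs n)]
  calc _ ≤ ‖s - 1‖ / ((n + 1) * (min 1 s.re * (n + 1))) := by
        gcongr; exact min_one_re_mul_le_norm_natCast_add s n
    _ = _ := by field_simp

lemma summable_inv_add_one_sq : Summable (fun n : ℕ ↦ (((n : ℝ) + 1) ^ 2)⁻¹) := by
  simpa using (summable_nat_add_iff 1).mpr (Real.summable_one_div_nat_pow.mpr one_lt_two)

lemma summable_norm_inv_add_one_sub_inv_add {s : ℂ} (hs : 0 < s.re) :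
    Summable (fun n : ℕ ↦ ‖((n : ℂ) + 1)⁻¹ - ((n : ℂ) + s)⁻¹‖) :=
  .of_nonneg_of_le (fun _ ↦ norm_nonneg _) (norm_inv_add_one_sub_inv_add_le hs)
    (summable_inv_add_one_sq.mul_left _)

lemma differentiableOn_tsum_inv_add_one_sub_inv_add :
    DifferentiableOn ℂ (fun s ↦ ∑' n : ℕ, (((n : ℂ) + 1)⁻¹ - ((n : ℂ) + s)⁻¹)) {s | 0 < s.re} := by
  intro s hs
  set U := {w : ℂ | s.re / 2 < w.re} ∩ Metric.ball 0 (‖s‖ + 1)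
  have hU : IsOpen U := (isOpen_lt continuous_const continuous_re).inter Metric.isOpen_ball
  have hsU : s ∈ U := ⟨half_lt_self (α := ℝ) hs, by simp⟩
  have hterm (n : ℕ) (w : ℂ) (hw : w ∈ U) : ‖((n : ℂ) + 1)⁻¹ - ((n : ℂ) + w)⁻¹‖ ≤
      (‖s‖ + 2) / min 1 (s.re / 2) * (((n : ℝ) + 1) ^ 2)⁻¹ := by
    have hre : s.re / 2 < w.re := hw.1
    have hnorm : ‖w‖ < ‖s‖ + 1 := by simpa using hw.2
    refine (norm_inv_add_one_sub_inv_add_le (by linarith [hs.out]) n).trans ?_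
    gcongr
    · exact lt_min one_pos (half_pos hs)
    · linarith [norm_sub_le w 1, norm_one (α := ℂ)]
  have hdiff (n : ℕ) : DifferentiableOn ℂ (fun w ↦ ((n : ℂ) + 1)⁻¹ - ((n : ℂ) + w)⁻¹) U :=
    fun w hw ↦ ((differentiableAt_const _).sub ((differentiableAt_id.const_add _).inv
      (natCast_add_ne_zero ((half_pos hs).trans hw.1) n))).differentiableWithinAt
  exact ((differentiableOn_tsum_of_summable_norm (summable_inv_add_one_sq.mul_left _) hdiff hU
    hterm).differentiableAt (hU.mem_nhds hsU)).differentiableWithinAt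

lemma ne_neg_natCast_of_re_pos {s : ℂ} (hs : 0 < s.re) (m : ℕ) : s ≠ -m := by
  rintro rfl
  simp at hs
  linarith [m.cast_nonneg (α := ℝ)]

lemma analyticOnNhd_digamma : AnalyticOnNhd ℂ digamma {s | 0 < s.re} := by
  have hopen : IsOpen {s : ℂ | 0 < s.re} := isOpen_lt continuous_const continuous_re
  have hGamma : AnalyticOnNhd ℂ Gamma {s | 0 < s.re} :=
    DifferentiableOn.analyticOnNhd (fun s hs ↦
      (differentiableAt_Gamma s (ne_neg_natCast_of_re_pos hs)).differentiableWithinAt) hopen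
  exact hGamma.deriv.div hGamma fun s hs ↦ Gamma_ne_zero (ne_neg_natCast_of_re_pos hs)

lemma digamma_ofReal {x : ℝ} (hx : ∀ m : ℕ, x ≠ -m) :
    digamma x = ((deriv (Real.log ∘ Real.Gamma) x : ℝ) : ℂ) := by
  have hxc : ∀ m : ℕ, (x : ℂ) ≠ -m := fun m h ↦ hx m (by exact_mod_cast h)
  have hderiv : deriv Gamma x = ((deriv Real.Gamma x : ℝ) : ℂ) := by
    have h := (differentiableAt_Gamma _ hxc).hasDerivAt.comp_ofReal
    simp only [Gamma_ofReal] at h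
    exact h.unique (Real.differentiableAt_Gamma hx).hasDerivAt.ofReal_comp
  rw [Function.comp_def, deriv.log (Real.differentiableAt_Gamma hx) (Real.Gamma_ne_zero hx),
    digamma_def, logDeriv_apply, hderiv, Gamma_ofReal, ofReal_div]

lemma hasSum_digamma_ofReal {x : ℝ} (hx : 0 < x) :
    HasSum (fun n : ℕ ↦ ((n : ℂ) + 1)⁻¹ - ((n : ℂ) + x)⁻¹) (digamma x + γ) := by
  have hterm : (fun n : ℕ ↦ ((n : ℂ) + 1)⁻¹ - ((n : ℂ) + x)⁻¹) =
      fun n : ℕ ↦ ((((n : ℝ) + 1)⁻¹ - ((n : ℝ) + x)⁻¹ : ℝ) : ℂ) := by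
    ext n; push_cast; rfl
  have hsum := (summable_norm_inv_add_one_sub_inv_add (s := x) (by simpa using hx)).of_norm
  rw [hterm] at hsum ⊢
  rw [digamma_ofReal fun m ↦ ((neg_nonpos.mpr m.cast_nonneg).trans_lt hx).ne', ← ofReal_add,
    hasSum_ofReal]
  exact (summable_ofReal.mp hsum).hasSum_iff_tendsto_nat.mpr
    (Real.tendsto_sum_range_inv_add_one_sub_inv_add hx)

theorem hasSum_digamma {s : ℂ} (hs : 0 < s.re) :
    HasSum (fun n : ℕ ↦ ((n : ℂ) + 1)⁻¹ - ((n : ℂ) + s)⁻¹) (digamma s + γ) := by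
  set F := fun s ↦ ∑' n : ℕ, (((n : ℂ) + 1)⁻¹ - ((n : ℂ) + s)⁻¹)
  have hopen : IsOpen {s : ℂ | 0 < s.re} := isOpen_lt continuous_const continuous_re
  have hF : AnalyticOnNhd ℂ (fun s ↦ F s - γ) {s | 0 < s.re} :=
    (differentiableOn_tsum_inv_add_one_sub_inv_add.sub_const _).analyticOnNhd hopen
  have hofReal : Tendsto ((↑) : ℝ → ℂ) (𝓝[≠] 1) (𝓝[≠] 1) := by
    rw [tendsto_nhdsWithin_iff]
    exact ⟨tendsto_nhdsWithin_of_tendsto_nhds continuous_ofReal.continuousAt,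
      eventually_nhdsWithin_iff.mpr (.of_forall fun t ht ↦ ofReal_ne_one.mpr ht)⟩
  have hreal : ∃ᶠ z in 𝓝[≠] (1 : ℂ), digamma z = F z - γ := by
    refine hofReal.frequently (Eventually.frequently ?_)
    filter_upwards [nhdsWithin_le_nhds (eventually_gt_nhds one_pos)] with x hx
    rw [show F x = _ from (hasSum_digamma_ofReal hx).tsum_eq, add_sub_cancel_right]
  have heq := analyticOnNhd_digamma.eqOn_of_preconnected_of_frequently_eq hF
    (convex_halfSpace_re_gt 0).isPreconnected (by simp) hreal hs
  rw [heq, sub_add_cancel]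
  exact (summable_norm_inv_add_one_sub_inv_add hs).of_norm.hasSum

lemma sum_range_norm_inv_add_one_sub_inv_add_le {s : ℂ} (hs : s.im ≠ 0) (N : ℕ) :
    ∑ n ∈ range N, ‖((n : ℂ) + 1)⁻¹ - ((n : ℂ) + s)⁻¹‖ ≤ ‖s - 1‖ / |s.im| * harmonic N := by
  rw [harmonic, Rat.cast_sum, mul_sum]
  refine sum_le_sum fun n _ ↦ ?_
  have hns : (n : ℂ) + s ≠ 0 := fun h ↦ hs (by simpa using congrArg im h)
  have hle : |s.im| ≤ ‖(n : ℂ) + s‖ := by simpa using abs_im_le_norm ((n : ℂ) + s)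
  rw [norm_inv_add_one_sub_inv_add hns]
  calc _ ≤ ‖s - 1‖ / ((n + 1) * |s.im|) := by gcongr
    _ = _ := by push_cast; field_simp

lemma tsum_norm_inv_add_one_sub_inv_add_nat_add_le {s : ℂ} (hs : 0 < s.re) {N : ℕ} (hN : N ≠ 0) :
    ∑' n : ℕ, ‖(((n + N : ℕ) : ℂ) + 1)⁻¹ - (((n + N : ℕ) : ℂ) + s)⁻¹‖ ≤
      ‖s - 1‖ / min 1 s.re * (N : ℝ)⁻¹ := by
  have hsum := (summable_nat_add_iff N).mpr summable_inv_add_one_sq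
  calc _ ≤ ∑' n : ℕ, ‖s - 1‖ / min 1 s.re * ((((n + N : ℕ) : ℝ) + 1) ^ 2)⁻¹ :=
        Summable.tsum_le_tsum (fun n ↦ norm_inv_add_one_sub_inv_add_le hs (n + N))
          ((summable_nat_add_iff N).mpr (summable_norm_inv_add_one_sub_inv_add hs))
          (hsum.mul_left _)
    _ ≤ _ := by
        rw [tsum_mul_left]
        have : 0 ≤ ‖s - 1‖ / min 1 s.re := div_nonneg (norm_nonneg _) (le_min zero_le_one hs.le)
        exact mul_le_mul_of_nonneg_left (tsum_inv_natCast_add_add_one_sq_le hN) this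

lemma norm_ofReal_add_mul_I_sub_one_le (c u : ℝ) : ‖(c : ℂ) + u * I - 1‖ ≤ |c - 1| + |u| := by
  have h := norm_add_le (((c - 1 : ℝ)) : ℂ) (u * I)
  rwa [norm_mul, norm_I, mul_one, norm_real, norm_real, Real.norm_eq_abs, Real.norm_eq_abs,
    ofReal_sub, ofReal_one, sub_add_eq_add_sub] at h

/-- Split the series at `N = ⌊|u|⌋₊`: the first `N` terms are each at most `(1 + o(1)) / (n + 1)`
since `|n + s| ≥ |u|`, which produces the harmonic number `H_N ≤ 1 + log |u|`; the remaining
terms are `O(|u| / n²)`, which sum to `O(1)`. -/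
theorem exists_norm_digamma_le {c : ℝ} (hc : 0 < c) :
    ∃ C > 0, ∀ u : ℝ, 1 ≤ |u| → ‖digamma (c + u * I)‖ ≤ Real.log |u| + C := by
  set A := |c - 1|
  set m := min 1 c
  have hm : 0 < m := lt_min one_pos hc
  refine ⟨|γ| + 1 + A + 2 * (A + 1) / m, by positivity, fun u hu ↦ ?_⟩
  set s : ℂ := c + u * I
  have hs : 0 < s.re := by simpa [s] using hc
  have hu0 : 0 < |u| := one_pos.trans_le hu
  set N := ⌊|u|⌋₊
  have hN : N ≠ 0 := (Nat.floor_pos.mpr hu).ne'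
  have hNu : |u| ≤ 2 * N := by
    have := Nat.lt_floor_add_one |u|
    have : (1 : ℝ) ≤ N := by exact_mod_cast Nat.one_le_iff_ne_zero.mpr hN
    linarith
  have hs1 : ‖s - 1‖ ≤ A + |u| := norm_ofReal_add_mul_I_sub_one_le c u
  have hlog : 1 + Real.log |u| ≤ |u| := by linarith [Real.log_le_sub_one_of_pos hu0]
  have hsum := summable_norm_inv_add_one_sub_inv_add hs
  have hhead : ∑ n ∈ range N, ‖((n : ℂ) + 1)⁻¹ - ((n : ℂ) + s)⁻¹‖ ≤ 1 + Real.log |u| + A := by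
    refine (sum_range_norm_inv_add_one_sub_inv_add_le (by simpa [s] using hu0.ne') N).trans ?_
    have hH : (harmonic N : ℝ) ≤ 1 + Real.log |u| := harmonic_floor_le_one_add_log |u| hu
    have him : s.im = u := by simp [s]
    rw [him, div_mul_eq_mul_div, div_le_iff₀ hu0]
    nlinarith [mul_le_mul hs1 hH (Rat.cast_nonneg.mpr (harmonic_pos hN).le) (by positivity),
      mul_le_mul_of_nonneg_left hlog (abs_nonneg (c - 1))]
  have htail := tsum_norm_inv_add_one_sub_inv_add_nat_add_le hs hN
  have htail' : ‖s - 1‖ / min 1 s.re * (N : ℝ)⁻¹ ≤ 2 * (A + 1) / m := by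
    have hre : s.re = c := by simp [s]
    have hN1 : (1 : ℝ) ≤ N := by exact_mod_cast Nat.one_le_iff_ne_zero.mpr hN
    have hA : 0 ≤ A := abs_nonneg _
    have : ‖s - 1‖ ≤ 2 * (A + 1) * N := by nlinarith
    rw [hre, ← div_eq_mul_inv, div_div, div_le_div_iff₀ (by positivity) hm]
    nlinarith
  calc ‖digamma s‖ = ‖(digamma s + γ) - γ‖ := by rw [add_sub_cancel_right]
    _ ≤ ‖digamma s + γ‖ + |γ| := by rw [← Real.norm_eq_abs, ← norm_real]; exact norm_sub_le _ _
    _ ≤ ∑' n : ℕ, ‖((n : ℂ) + 1)⁻¹ - ((n : ℂ) + s)⁻¹‖ + |γ| := by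
        rw [← (hasSum_digamma hs).tsum_eq]; gcongr; exact norm_tsum_le_tsum_norm hsum
    _ = _ + _ + |γ| := by rw [← hsum.sum_add_tsum_nat_add N]
    _ ≤ _ := by linarith

lemma hasSum_re_digamma_sub {c : ℝ} (hc : 0 < c) (u : ℝ) :
    HasSum (fun n : ℕ ↦ u ^ 2 / ((n + c) * ((n + c) ^ 2 + u ^ 2)))
      ((digamma (c + u * I)).re - (digamma c).re) := by
  have h := hasSum_re ((hasSum_digamma (s := c + u * I) (by simpa using hc)).sub
    (hasSum_digamma (s := c) (by simpa using hc)))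
  rw [add_sub_add_right_eq_sub, sub_re] at h
  refine h.congr_fun fun n ↦ ?_
  have hcast : ((n : ℂ) + c) = ((n + c : ℝ) : ℂ) := by push_cast; ring
  rw [sub_sub_sub_cancel_left, sub_re, hcast, ← ofReal_inv, ofReal_re,
    show ((n : ℂ) + (c + u * I)) = ((n + c : ℝ) : ℂ) + u * I by push_cast; ring, inv_re,
    normSq_add_mul_I]
  simp only [add_re, ofReal_re, mul_re, I_re, mul_zero, ofReal_im, I_im, mul_one, sub_self,
    add_zero]
  field_simp
  ring

/-- Only the terms with `n + 1 ≤ u` of the nonnegative series `hasSum_re_digamma_sub` are kept;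
each is `≫ 1 / (n + 1)`, giving a multiple of the harmonic number `H_{⌊u⌋} ≥ log u`. -/
lemma re_digamma_add_mul_log_le {c u : ℝ} (hc : 0 < c) (hu : 1 ≤ u) :
    (digamma c).re + ((1 + c) * (1 + (1 + c) ^ 2))⁻¹ * Real.log u ≤ (digamma (c + u * I)).re := by
  set K := ((1 + c) * (1 + (1 + c) ^ 2))⁻¹
  have hu0 : 0 < u := one_pos.trans_le hu
  have hterm (n : ℕ) (hn : n ∈ range ⌊u⌋₊) :
      K * ((n : ℝ) + 1)⁻¹ ≤ u ^ 2 / ((n + c) * ((n + c) ^ 2 + u ^ 2)) := by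
    have hnu : (n : ℝ) + 1 ≤ u := by
      have : ((n + 1 : ℕ) : ℝ) ≤ ⌊u⌋₊ := by exact_mod_cast mem_range.mp hn
      push_cast at this
      exact this.trans (Nat.floor_le hu0.le)
    have hnc : (n : ℝ) + c ≤ (1 + c) * (n + 1) := by nlinarith [n.cast_nonneg (α := ℝ)]
    have hnc0 : (0 : ℝ) < n + c := by positivity
    have hsq : ((n : ℝ) + c) ^ 2 ≤ (1 + c) ^ 2 * u ^ 2 := by
      rw [← mul_pow]
      exact pow_le_pow_left₀ hnc0.le (hnc.trans (by gcongr)) 2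
    rw [← div_eq_mul_inv, div_le_div_iff₀ (by positivity) (by positivity),
      inv_mul_le_iff₀ (by positivity)]
    calc ((n : ℝ) + c) * ((n + c) ^ 2 + u ^ 2)
        ≤ ((1 + c) * (n + 1)) * ((1 + c) ^ 2 * u ^ 2 + u ^ 2) :=
          mul_le_mul hnc (by linarith) (by positivity) (by positivity)
      _ = _ := by ring
  have hsum := sum_le_hasSum (range ⌊u⌋₊) (fun n _ ↦ by positivity) (hasSum_re_digamma_sub hc u)
  have hlog : K * Real.log u ≤ ∑ n ∈ range ⌊u⌋₊, K * ((n : ℝ) + 1)⁻¹ := by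
    rw [← mul_sum]
    gcongr
    simpa [harmonic] using log_le_harmonic_floor u hu0.le
  linarith [sum_le_sum hterm]

lemma tendsto_re_digamma_atTop {c : ℝ} (hc : 0 < c) :
    Tendsto (fun u : ℝ ↦ (digamma (c + u * I)).re) atTop atTop := by
  refine tendsto_atTop_mono' _ ?_ (tendsto_atTop_add_const_left _ (digamma c).re
    (Real.tendsto_log_atTop.const_mul_atTop (by positivity : 0 < ((1 + c) * (1 + (1 + c) ^ 2))⁻¹)))
  filter_upwards [eventually_ge_atTop 1] with u hu using re_digamma_add_mul_log_le hc hu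

lemma continuous_digamma_ofReal_add_mul_I {c : ℝ} (hc : 0 < c) :
    Continuous (fun t : ℝ ↦ digamma (c + t * I)) :=
  analyticOnNhd_digamma.continuousOn.comp_continuous (by fun_prop) fun t ↦ by simpa using hc

lemma integrable_digamma_div_norm_sq {c : ℝ} (hc : 0 < c) :
    Integrable (fun t : ℝ ↦ digamma (c + t * I) / ((‖(c : ℂ) + t * I‖ : ℝ) : ℂ) ^ 2) := by
  obtain ⟨C, hC0, hC⟩ := exists_norm_digamma_le hc
  have hnorm (t : ℝ) : 0 < ‖(c : ℂ) + t * I‖ :=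
    hc.trans_le (by simpa using re_le_norm ((c : ℂ) + t * I))
  refine integrable_of_norm_le_mul_abs_rpow_neg (K := 2 + C) (r := 3 / 2) ?_ (by norm_num)
    fun t ht ↦ ?_
  · exact (continuous_digamma_ofReal_add_mul_I hc).div (by fun_prop)
      fun t ↦ pow_ne_zero 2 (ofReal_ne_zero.mpr (hnorm t).ne')
  have habs : |t| ≤ ‖(c : ℂ) + t * I‖ := by simpa using abs_im_le_norm ((c : ℂ) + t * I)
  rw [norm_div, norm_pow, norm_real, Real.norm_of_nonneg (norm_nonneg _)]
  calc _ ≤ (Real.log |t| + C) / |t| ^ 2 :=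
        div_le_div₀ (by linarith [Real.log_nonneg ht]) (hC t ht) (by positivity) (by gcongr)
    _ ≤ _ := log_add_div_sq_le_mul_rpow ht hC0.le

lemma not_integrable_digamma_div_norm {c : ℝ} (hc : 0 < c) :
    ¬ Integrable (fun t : ℝ ↦ digamma (c + t * I) / ((‖(c : ℂ) + t * I‖ : ℝ) : ℂ)) := by
  refine not_integrable_of_mul_inv_le_norm (δ := (1 + c)⁻¹) (by positivity) ?_
  filter_upwards [(tendsto_re_digamma_atTop hc).eventually_ge_atTop 1, eventually_ge_atTop 1]
    with t hre ht
  have hnorm : 0 < ‖(c : ℂ) + t * I‖ := hc.trans_le (by simpa using re_le_norm ((c : ℂ) + t * I))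
  have hle : ‖(c : ℂ) + t * I‖ ≤ (1 + c) * t := by
    refine (norm_add_le _ _).trans ?_
    rw [norm_mul, norm_I, mul_one, norm_real, norm_real, Real.norm_of_nonneg hc.le,
      Real.norm_of_nonneg (by linarith)]
    nlinarith
  rw [norm_div, norm_real, Real.norm_of_nonneg hnorm.le, ← mul_inv, ← one_div,
    div_le_div_iff₀ (by positivity) hnorm]
  nlinarith [hre.trans (re_le_norm _)]

end Complex

/-- For c > 0 the digamma function satisfies ‖Γ'/Γ(c+iu)‖ ≤ log|u| + C₀ for
|u| ≥ 1; consequently the vertical order of Γ is m₀(Γ) = 2: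
t ↦ |c+it|^{−2}(Γ'/Γ)(c+it) is integrable while
t ↦ |c+it|^{−1}(Γ'/Γ)(c+it) is not. -/
theorem stmt17 (c : ℝ) (hc : 0 < c) :
    ∃ C₀ > (0 : ℝ),
      (∀ u : ℝ, 1 ≤ |u| →
        ‖deriv Complex.Gamma ((c : ℂ) + u * I) / Complex.Gamma ((c : ℂ) + u * I)‖ ≤
          Real.log |u| + C₀) ∧
      Integrable (fun t : ℝ =>
        deriv Complex.Gamma ((c : ℂ) + t * I) / Complex.Gamma ((c : ℂ) + t * I) /
          ((‖(c : ℂ) + t * I‖ : ℝ) : ℂ) ^ 2) ∧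
      ¬ Integrable (fun t : ℝ =>
        deriv Complex.Gamma ((c : ℂ) + t * I) / Complex.Gamma ((c : ℂ) + t * I) /
          ((‖(c : ℂ) + t * I‖ : ℝ) : ℂ) ^ 1) := by
  obtain ⟨C₀, hC₀, hbound⟩ := exists_norm_digamma_le hc
  simp only [pow_one]
  exact ⟨C₀, hC₀, hbound, integrable_digamma_div_norm_sq hc, not_integrable_digamma_div_norm hc⟩
end

section
/- For each integer n ≥ 1 set ρₙ = n² 2ⁿ i and nₙ = 2ⁿ. Then (i) ∑_{n≥1} nₙ |ρₙ|^{−1} < ∞, and for every s with Re s > 0 the series g(s) = ∑_{n≥1} 2ⁿ/(s − n² 2ⁿ i) converges absolutely; (ii) for every c > 0 and every ε with 0 < ε < 1, and for every C > 0, there exists an integer k ≥ 1 such that the point s = c + k² 2^k i satisfies |g(s)| > C |s|^{1−ε}. In particular, the estimate |g(s)| ≤ C₀|s|^{1−ε} fails on the half-plane Re s > 0 for every ε > 0. -/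
open Complex

/-!
Write `ρₙ = hₙ i` with `hₙ = n² 2ⁿ`. Since `2ⁿ / hₙ = 1 / n²`, part (i) is the Basel series.
The heights grow so fast that `h_{n+1} ≥ 2 hₙ`, hence `|hₖ - hₙ| ≥ hₙ / 2` for `n ≠ k`, and a point
whose imaginary part is far from all heights (eventually true of any `s`) sees terms of size at
most `2 / n²`. At `sₖ = c + hₖ i` the `k`-th term is `2ᵏ / c`, while all the others add up to at
most `π² / 3 < 4`, so `|g(sₖ)| ≥ 2ᵏ / c - 4`. On the other hand
`|sₖ|^{1-ε} ≤ |sₖ| / (2ᵏ)^ε = O(k² 2ᵏ / 2^{εk}) = o(2ᵏ)`.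
-/

open Filter Topology Asymptotics

namespace LeftLocatedDivisor

noncomputable def height (n : ℕ) : ℝ := (n : ℝ) ^ 2 * 2 ^ n

lemma ofReal_height (n : ℕ) : (height n : ℂ) = (n : ℂ) ^ 2 * 2 ^ n := by
  push_cast [height]; rfl

lemma ofReal_height_succ (n : ℕ) : (height (n + 1) : ℂ) = ((n : ℂ) + 1) ^ 2 * 2 ^ (n + 1) := by
  rw [ofReal_height]; push_cast; rfl

lemma height_nonneg (n : ℕ) : 0 ≤ height n := by
  unfold height; positivity

lemma two_pow_le_height {n : ℕ} (hn : 1 ≤ n) : (2 : ℝ) ^ n ≤ height n := by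
  have : (1 : ℝ) ≤ (n : ℝ) ^ 2 := one_le_pow₀ (by exact_mod_cast hn)
  unfold height
  nlinarith [pow_pos (two_pos (α := ℝ)) n]

lemma height_le_half_height {a b : ℕ} (hab : a < b) : height a ≤ height b / 2 := by
  have hsq : (a : ℝ) ^ 2 ≤ (b : ℝ) ^ 2 := by gcongr
  have hpow : (2 : ℝ) ^ a * 2 ≤ 2 ^ b := by
    rw [← pow_succ]; exact pow_le_pow_right₀ one_le_two hab
  unfold height
  nlinarith [pow_pos (two_pos (α := ℝ)) a, sq_nonneg (b : ℝ)]

lemma half_height_le_abs_sub {m k : ℕ} (hmk : m ≠ k) :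
    height m / 2 ≤ |height k - height m| := by
  rcases hmk.lt_or_gt with h | h
  · have := height_le_half_height h
    rw [abs_of_nonneg (by linarith [height_nonneg m])]
    linarith [height_nonneg m]
  · have := height_le_half_height h
    rw [abs_of_nonpos (by linarith [height_nonneg k])]
    linarith [height_nonneg k]

lemma two_pow_div_height_succ (n : ℕ) :
    (2 : ℝ) ^ (n + 1) / height (n + 1) = 1 / ((n : ℝ) + 1) ^ 2 := by
  unfold height; push_cast; field_simp

lemma hasSum_one_div_succ_sq :
    HasSum (fun n : ℕ => 1 / ((n : ℝ) + 1) ^ 2) (Real.pi ^ 2 / 6) := by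
  simpa using (hasSum_nat_add_iff' 1).2 hasSum_zeta_two

lemma norm_two_pow_div_le {s : ℂ} {n : ℕ}
    (hs : height (n + 1) / 2 ≤ |s.im - height (n + 1)|) :
    ‖(2 : ℂ) ^ (n + 1) / (s - height (n + 1) * I)‖ ≤ 2 / ((n : ℝ) + 1) ^ 2 := by
  have hden : height (n + 1) / 2 ≤ ‖s - height (n + 1) * I‖ := by
    refine hs.trans ?_
    simpa using abs_im_le_norm (s - height (n + 1) * I)
  have hpos : 0 < height (n + 1) / 2 :=
    half_pos ((pow_pos two_pos _).trans_le (two_pow_le_height n.succ_pos))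
  calc ‖(2 : ℂ) ^ (n + 1) / (s - height (n + 1) * I)‖
      = (2 : ℝ) ^ (n + 1) / ‖s - height (n + 1) * I‖ := by simp
    _ ≤ (2 : ℝ) ^ (n + 1) / (height (n + 1) / 2) := by gcongr
    _ = 2 * ((2 : ℝ) ^ (n + 1) / height (n + 1)) := by ring
    _ = 2 / ((n : ℝ) + 1) ^ 2 := by rw [two_pow_div_height_succ]; ring

lemma summable_two_pow_div_norm :
    Summable fun n : ℕ => (2 : ℝ) ^ (n + 1) / ‖(height (n + 1) : ℂ) * I‖ := by
  have hnorm (n : ℕ) : ‖(height (n + 1) : ℂ) * I‖ = height (n + 1) := by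
    simp [abs_of_nonneg (height_nonneg _)]
  simpa only [hnorm, two_pow_div_height_succ] using hasSum_one_div_succ_sq.summable

lemma summable_norm_two_pow_div (s : ℂ) :
    Summable fun n : ℕ => ‖(2 : ℂ) ^ (n + 1) / (s - height (n + 1) * I)‖ := by
  have hheight : Tendsto (fun n : ℕ => height (n + 1)) atTop atTop :=
    tendsto_atTop_mono (fun n => two_pow_le_height n.succ_pos)
      ((tendsto_pow_atTop_atTop_of_one_lt one_lt_two).comp (tendsto_add_atTop_nat 1))
  refine .of_norm_bounded_eventually_nat (hasSum_one_div_succ_sq.summable.mul_left 2) ?_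
  filter_upwards [hheight.eventually_ge_atTop (2 * |s.im|)] with n hn
  rw [norm_norm, mul_one_div]
  refine norm_two_pow_div_le ?_
  rw [abs_sub_comm]
  linarith [abs_sub_abs_le_abs_sub (height (n + 1)) s.im, abs_of_nonneg (height_nonneg (n + 1))]

lemma norm_sub_le_norm_tsum {ι E : Type*} [NormedAddCommGroup E] [DecidableEq ι]
    {f : ι → E} {g : ι → ℝ} {a : ℝ} (hf : Summable f) (hg : HasSum g a) (j : ι)
    (hgj : 0 ≤ g j) (hfg : ∀ n, n ≠ j → ‖f n‖ ≤ g n) :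
    ‖f j‖ - a ≤ ‖∑' n, f n‖ := by
  have hrest : ‖∑' n, if n = j then 0 else f n‖ ≤ a := by
    refine tsum_of_norm_bounded hg fun n => ?_
    split_ifs with h
    · simpa [h] using hgj
    · exact hfg n h
  have htri := norm_sub_norm_le (f j) (-∑' n, if n = j then 0 else f n)
  rw [norm_neg, sub_neg_eq_add] at htri
  rw [hf.tsum_eq_add_tsum_ite j]
  linarith

lemma two_pow_div_sub_four_le_norm_tsum {c : ℝ} (hc : 0 < c) {k : ℕ} (hk : 1 ≤ k) :
    (2 : ℝ) ^ k / c - 4 ≤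
      ‖∑' n : ℕ, (2 : ℂ) ^ (n + 1) / ((c + height k * I) - height (n + 1) * I)‖ := by
  obtain ⟨j, rfl⟩ := Nat.exists_eq_add_of_le' hk
  have hpeak : ‖(2 : ℂ) ^ (j + 1) / ((c + height (j + 1) * I) - height (j + 1) * I)‖ =
      (2 : ℝ) ^ (j + 1) / c := by
    simp [abs_of_pos hc]
  have hrest (n : ℕ) (hn : n ≠ j) :
      ‖(2 : ℂ) ^ (n + 1) / ((c + height (j + 1) * I) - height (n + 1) * I)‖ ≤
        2 / ((n : ℝ) + 1) ^ 2 := by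
    refine norm_two_pow_div_le ?_
    simpa using half_height_le_abs_sub (m := n + 1) (k := j + 1) (by omega)
  have hpi : Real.pi ^ 2 / 3 < 4 := by nlinarith [Real.pi_lt_d2, Real.pi_pos]
  have hsum := hasSum_one_div_succ_sq.mul_left 2
  simp only [mul_one_div] at hsum
  have := norm_sub_le_norm_tsum (summable_norm_two_pow_div _).of_norm hsum j (by positivity) hrest
  rw [hpeak] at this
  linarith

lemma norm_rpow_one_sub_le (c : ℝ) {ε : ℝ} (hε : 0 ≤ ε) {k : ℕ} (hk : 1 ≤ k) :
    ‖(c : ℂ) + height k * I‖ ^ (1 - ε) ≤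
      (|c| + 1) * ((k : ℝ) ^ 2 / (2 ^ ε) ^ k) * 2 ^ k := by
  set s : ℂ := c + height k * I
  have h2k : (2 : ℝ) ^ k ≤ height k := two_pow_le_height hk
  have h1 : 1 ≤ height k := (one_le_pow₀ one_le_two).trans h2k
  have hlow : height k ≤ ‖s‖ := by
    simpa [s, abs_of_nonneg (height_nonneg k)] using abs_im_le_norm s
  have hup : ‖s‖ ≤ (|c| + 1) * height k := by
    have := norm_le_abs_re_add_abs_im s
    simp [s, abs_of_nonneg (height_nonneg k)] at this
    nlinarith [abs_nonneg c]
  have hs : 0 < ‖s‖ := by linarith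
  calc ‖s‖ ^ (1 - ε) = ‖s‖ / ‖s‖ ^ ε := by rw [Real.rpow_sub hs, Real.rpow_one]
    _ ≤ (|c| + 1) * height k / ((2 : ℝ) ^ k) ^ ε := by
        gcongr
        exact h2k.trans hlow
    _ = (|c| + 1) * ((k : ℝ) ^ 2 / (2 ^ ε) ^ k) * 2 ^ k := by
        rw [← Real.rpow_pow_comm zero_le_two, height]; field_simp

lemma isLittleO_norm_rpow_one_sub (c : ℝ) {ε : ℝ} (hε : 0 < ε) :
    (fun k : ℕ => ‖(c : ℂ) + height k * I‖ ^ (1 - ε)) =o[atTop] fun k => (2 : ℝ) ^ k := by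
  have hlim : Tendsto (fun k : ℕ => (|c| + 1) * ((k : ℝ) ^ 2 / (2 ^ ε) ^ k)) atTop (𝓝 0) := by
    simpa using (tendsto_pow_const_div_const_pow_of_one_lt 2
      (Real.one_lt_rpow one_lt_two hε)).const_mul (|c| + 1)
  have hbound :=
    ((isLittleO_one_iff ℝ).2 hlim).mul_isBigO (isBigO_refl (fun k : ℕ => (2 : ℝ) ^ k) atTop)
  simp only [one_mul] at hbound
  refine IsBigO.trans_isLittleO (IsBigO.of_bound' ?_) hbound
  filter_upwards [eventually_ge_atTop 1] with k hk
  rw [Real.norm_of_nonneg (by positivity), Real.norm_of_nonneg (by positivity)]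
  exact norm_rpow_one_sub_le c hε.le hk

end LeftLocatedDivisor

open LeftLocatedDivisor

/-- Sharpness of the exponent d in the estimate |f_H'/f_H(s)| ≤ C₀|s|^d:
for the divisor with zeros ρₙ = n²2ⁿi of multiplicities nₙ = 2ⁿ (n ≥ 1),
(i) ∑ nₙ|ρₙ|⁻¹ < ∞ and g(s) = ∑ₙ 2ⁿ/(s − n²2ⁿi) converges absolutely on
Re s > 0, while (ii) no bound |g(s)| ≤ C|s|^{1−ε} with ε > 0 holds there. -/
theorem stmt19 :
    (Summable fun n : ℕ =>
      ((2 : ℝ) ^ (n + 1)) /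
        ‖((((n : ℂ) + 1) ^ 2) * 2 ^ (n + 1) * I)‖) ∧
    (∀ s : ℂ, 0 < s.re →
      Summable fun n : ℕ =>
        ‖((2 : ℂ) ^ (n + 1) /
          (s - (((n : ℂ) + 1) ^ 2) * 2 ^ (n + 1) * I))‖) ∧
    (∀ c : ℝ, 0 < c → ∀ ε : ℝ, 0 < ε → ε < 1 → ∀ C : ℝ, 0 < C →
      ∃ k : ℕ, 1 ≤ k ∧
        C * ‖((c : ℂ) + (k : ℂ) ^ 2 * 2 ^ k * I)‖ ^ ((1 : ℝ) - ε) <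
          ‖(∑' n : ℕ, (2 : ℂ) ^ (n + 1) /
            (((c : ℂ) + (k : ℂ) ^ 2 * 2 ^ k * I) -
              (((n : ℂ) + 1) ^ 2) * 2 ^ (n + 1) * I))‖) := by
  simp only [← ofReal_height_succ, ← ofReal_height]
  refine ⟨summable_two_pow_div_norm, fun s _ => summable_norm_two_pow_div s,
    fun c hc ε hε _ C hC => ?_⟩
  have hsmall := ((isLittleO_norm_rpow_one_sub c hε).const_mul_left C).bound
    (inv_pos.2 (mul_pos two_pos hc))
  have hlarge := (tendsto_pow_atTop_atTop_of_one_lt (one_lt_two (α := ℝ))).eventually_gt_atTop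
    (8 * c)
  obtain ⟨k, hk, hsmallk, hlargek⟩ := ((eventually_ge_atTop 1).and (hsmall.and hlarge)).exists
  refine ⟨k, hk, ?_⟩
  rw [Real.norm_of_nonneg (by positivity), Real.norm_of_nonneg (by positivity)] at hsmallk
  calc C * ‖(c : ℂ) + height k * I‖ ^ (1 - ε) ≤ (2 * c)⁻¹ * 2 ^ k := hsmallk
    _ < 2 ^ k / c - 4 := by
        have h4 : 4 < (2 * c)⁻¹ * 2 ^ k := by
          rw [inv_mul_eq_div, lt_div_iff₀ (by positivity)]; linarith
        have hhalf : (2 : ℝ) ^ k / c = 2 * ((2 * c)⁻¹ * 2 ^ k) := by field_simp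
        linarith
    _ ≤ _ := two_pow_div_sub_four_le_norm_tsum hc hk
end
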